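/- arXiv:1001.4907 — 7 statements merged into one kernel-verified Lean document; each statement's English description precedes it below -/
import Mathlib

section
/- Fix t ∈ [0,T] and a ∈ ℝ. The map ω ↦ M_{t ∧ τ̲_a(ω)}(ω) is continuous at every point ω₀ ∈ E at which M_{t ∧ τ̲_a(ω₀)}(ω₀) < a. -/
open Set Filter Topology

/-!
Because the hitting set `{s ∈ [0,T] | M_s(ω₀) ≥ a}` is closed, `M` is `≥ a` at `τ̲_a(ω₀)` as soon as
that set is nonempty; so `M_{t ∧ τ̲_a}(ω₀) < a` forces `M_s(ω₀) < a` on all of `[0,t]`. By compactness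
of `[0,t]` and joint continuity this persists for `ω` near `ω₀`, where then `t ≤ τ̲_a(ω)`; hence near
`ω₀` the map is `ω ↦ M_t(ω)`, which is continuous.
-/

/-- Lower hitting time `τ̲_a(ω) = inf{t ∈ [0,T] : M_t(ω) ≥ a} ∧ T` (with `inf ∅ = +∞`),
realized as `sInf ({t ∈ [0,T] | M ω t ≥ a} ∪ {T})`. -/
noncomputable def tauLow {E : Type*} (T : ℝ) (M : E → ℝ → ℝ) (a : ℝ) (ω : E) : ℝ :=
  sInf ({s ∈ Set.Icc (0 : ℝ) T | a ≤ M ω s} ∪ {T})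

section HittingTime

variable {E : Type*} {T : ℝ} {M : E → ℝ → ℝ} {a : ℝ} {ω : E}

lemma bddBelow_hittingSet_union :
    BddBelow ({s ∈ Icc (0 : ℝ) T | a ≤ M ω s} ∪ {T}) :=
  ⟨min 0 T, by
    rintro s (⟨⟨hs, -⟩, -⟩ | rfl)
    · exact (min_le_left 0 T).trans hs
    · exact min_le_right 0 s⟩

lemma tauLow_le {s : ℝ} (hs : s ∈ Icc 0 T) (hMs : a ≤ M ω s) : tauLow T M a ω ≤ s :=
  csInf_le bddBelow_hittingSet_union (Or.inl ⟨hs, hMs⟩)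

lemma le_tauLow {t : ℝ} (htT : t ≤ T) (h : ∀ s ∈ Icc 0 t, M ω s < a) : t ≤ tauLow T M a ω := by
  refine le_csInf (by simp) ?_
  rintro s (⟨⟨hs0, -⟩, hMs⟩ | rfl)
  · by_contra! hst
    exact (h s ⟨hs0, hst.le⟩).not_ge hMs
  · exact htT

lemma le_apply_tauLow (hc : ContinuousOn (M ω) (Icc 0 T)) {s : ℝ} (hs : s ∈ Icc 0 T)
    (hMs : a ≤ M ω s) : a ≤ M ω (tauLow T M a ω) := by
  have hclosed : IsClosed ({s ∈ Icc (0 : ℝ) T | a ≤ M ω s} ∪ {T}) :=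
    (hc.preimage_isClosed_of_isClosed isClosed_Icc isClosed_Ici).union isClosed_singleton
  rcases hclosed.csInf_mem (by simp) bddBelow_hittingSet_union with ⟨-, hτ⟩ | hτ
  · exact hτ
  · have hτs : tauLow T M a ω = s := le_antisymm (tauLow_le hs hMs)
      (by rw [show tauLow T M a ω = T from hτ]; exact hs.2)
    rwa [hτs]

lemma forall_lt_of_apply_min_tauLow_lt (hc : ContinuousOn (M ω) (Icc 0 T)) {t : ℝ}
    (htT : t ≤ T) (h : M ω (min t (tauLow T M a ω)) < a) : ∀ s ∈ Icc 0 t, M ω s < a := by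
  by_contra! ⟨s, hs, hMs⟩
  have hsT : s ∈ Icc 0 T := ⟨hs.1, hs.2.trans htT⟩
  rw [min_eq_right ((tauLow_le hsT hMs).trans hs.2)] at h
  exact h.not_ge (le_apply_tauLow hc hsT hMs)

end HittingTime

lemma eventually_forall_lt_of_continuousOn {X Y : Type*} [TopologicalSpace X] [TopologicalSpace Y]
    {f : X → Y → ℝ} {S K : Set Y} {a : ℝ} {x₀ : X}
    (hf : ContinuousOn (fun p : X × Y => f p.1 p.2) (univ ×ˢ S)) (hK : IsCompact K) (hKS : K ⊆ S)
    (hlt : ∀ y ∈ K, f x₀ y < a) : ∀ᶠ x in 𝓝 x₀, ∀ y ∈ K, f x y < a := by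
  have hloc : ∀ y ∈ K, ∀ᶠ p in 𝓝 (x₀, y), p.2 ∈ S → f p.1 p.2 < a := fun y hy =>
    (eventually_nhdsWithin_iff.mp (hf (x₀, y) ⟨mem_univ _, hKS hy⟩ (Iio_mem_nhds (hlt y hy)))).mono
      fun p hp hpS => hp ⟨mem_univ _, hpS⟩
  filter_upwards [hK.eventually_forall_of_forall_eventually (P := fun x y => y ∈ S → f x y < a) hloc]
    with x hx y hy
  exact hx y hy (hKS hy)

theorem stmt_0_general {E : Type*} [MetricSpace E] (T : ℝ)
    (M : E → ℝ → ℝ)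
    (hM : ContinuousOn (fun p : E × ℝ => M p.1 p.2) (Set.univ ×ˢ Set.Icc 0 T))
    (a : ℝ) (t : ℝ) (ht : t ∈ Set.Icc 0 T)
    (ω₀ : E) (hω₀ : M ω₀ (min t (tauLow T M a ω₀)) < a) :
    ContinuousAt (fun ω => M ω (min t (tauLow T M a ω))) ω₀ := by
  have hslice : ∀ ω, ContinuousOn (M ω) (Icc 0 T) := fun ω =>
    hM.comp (Continuous.prodMk_right ω).continuousOn fun _ hs => ⟨mem_univ _, hs⟩
  have hbelow : ∀ᶠ ω in 𝓝 ω₀, ∀ s ∈ Icc 0 t, M ω s < a :=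
    eventually_forall_lt_of_continuousOn hM isCompact_Icc (Icc_subset_Icc_right ht.2)
      (forall_lt_of_apply_min_tauLow_lt (hslice ω₀) ht.2 hω₀)
  have heq : (fun ω => M ω t) =ᶠ[𝓝 ω₀] fun ω => M ω (min t (tauLow T M a ω)) := by
    filter_upwards [hbelow] with ω hω
    rw [min_eq_left (le_tauLow ht.2 hω)]
  have hcont : Continuous fun ω => M ω t :=
    hM.comp_continuous (Continuous.prodMk_left t) fun _ => ⟨mem_univ _, ht⟩
  exact hcont.continuousAt.congr heq

theorem stmt_0 {E : Type*} [MetricSpace E] (T : ℝ) (hT : 0 < T)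
    (M : E → ℝ → ℝ)
    (hM : ContinuousOn (fun p : E × ℝ => M p.1 p.2) (Set.univ ×ˢ Set.Icc 0 T))
    (a : ℝ) (t : ℝ) (ht : t ∈ Set.Icc 0 T)
    (ω₀ : E) (hω₀ : M ω₀ (min t (tauLow T M a ω₀)) < a) :
    ContinuousAt (fun ω => M ω (min t (tauLow T M a ω))) ω₀ :=
  stmt_0_general T M hM a t ht ω₀ hω₀
end

section
/- Fix t ∈ [0,T] and a ∈ ℝ. The map ω ↦ M_{t ∧ τ̄_a(ω)}(ω) is continuous at every point ω₀ ∈ E at which M_{t ∧ τ̄_a(ω₀)}(ω₀) = a. -/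
open Set

/-- Upper hitting time `τ̄_a(ω) = inf{t ∈ [0,T] : M_t(ω) > a} ∧ T` (with `inf ∅ = +∞`),
realized as `sInf ({t ∈ [0,T] | M ω t > a} ∪ {T})`. -/
noncomputable def tauUp {E : Type*} (T : ℝ) (M : E → ℝ → ℝ) (a : ℝ) (ω : E) : ℝ :=
  sInf ({s ∈ Set.Icc (0 : ℝ) T | a < M ω s} ∪ {T})

/-!
Write `τ` for `tauUp T M a`. Along each path `M ≤ a` on `[0, τ)`, and if `τ < T` then `τ` is a
limit of times where `M > a`; by continuity, `M_τ ∈ [a, max a M_0]` whenever `τ < T`.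
If `τ(ω₀) < t`, a time `r < t` with `M_r(ω₀) > a` persists for nearby `ω`, so there the stopped
value is `M_τ(ω)`, squeezed between `a` and `max a M_0(ω) → max a M_0(ω₀) = a`. If `t ≤ τ(ω₀)`,
the stopped value always lies between `min M_t a` and `max M_t (max a M_0)`, and both bounds tend
to `a` since `M_t(ω₀) = a`.
-/

open Filter Topology

section tauUp

variable {E : Type*} {T a : ℝ} {M : E → ℝ → ℝ} {ω : E}

lemma bddBelow_tauUp_set (ω : E) : BddBelow ({s ∈ Icc (0 : ℝ) T | a < M ω s} ∪ {T}) :=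
  (bddBelow_Icc.mono (sep_subset _ _)).union bddBelow_singleton

lemma tauUp_le_right (ω : E) : tauUp T M a ω ≤ T :=
  csInf_le (bddBelow_tauUp_set ω) (Or.inr rfl)

lemma tauUp_nonneg (hT : 0 ≤ T) (ω : E) : 0 ≤ tauUp T M a ω := by
  refine le_csInf ⟨T, Or.inr rfl⟩ ?_
  rintro s (hs | rfl)
  exacts [hs.1.1, hT]

lemma tauUp_le {s : ℝ} (hs : s ∈ Icc 0 T) (h : a < M ω s) : tauUp T M a ω ≤ s :=
  csInf_le (bddBelow_tauUp_set ω) (Or.inl ⟨hs, h⟩)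

lemma apply_le_of_lt_tauUp {s : ℝ} (hs : 0 ≤ s) (h : s < tauUp T M a ω) : M ω s ≤ a :=
  not_lt.mp fun hlt => (tauUp_le ⟨hs, h.le.trans (tauUp_le_right ω)⟩ hlt).not_gt h

lemma exists_lt_of_tauUp_lt {t : ℝ} (ht : t ≤ T) (h : tauUp T M a ω < t) :
    ∃ r ∈ Icc 0 T, r < t ∧ a < M ω r := by
  obtain ⟨r, hr | rfl, hrt⟩ := (csInf_lt_iff (bddBelow_tauUp_set ω) ⟨T, Or.inr rfl⟩).mp h
  · exact ⟨r, hr.1, hrt, hr.2⟩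
  · exact absurd ht hrt.not_ge

lemma apply_zero_le_of_le_tauUp {s : ℝ} (hs : 0 ≤ s) (hsτ : s ≤ tauUp T M a ω)
    (h : M ω s ≤ a) : M ω 0 ≤ a := by
  rcases hs.eq_or_lt with rfl | hs
  exacts [h, apply_le_of_lt_tauUp le_rfl (hs.trans_le hsτ)]

lemma tauUp_mem_closure (hτ : tauUp T M a ω < T) :
    tauUp T M a ω ∈ closure {s ∈ Icc (0 : ℝ) T | a < M ω s} := by
  have := csInf_mem_closure ⟨T, Or.inr rfl⟩ (bddBelow_tauUp_set (M := M) (a := a) ω)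
  rw [closure_union, closure_singleton] at this
  exact this.resolve_right hτ.ne

lemma tauUp_mem_Icc_of_lt (hτ : tauUp T M a ω < T) : tauUp T M a ω ∈ Icc 0 T :=
  closure_minimal (sep_subset _ _) isClosed_Icc (tauUp_mem_closure hτ)

variable (hc : ContinuousOn (M ω) (Icc 0 T))
include hc

lemma apply_tauUp_le (hτ : 0 < tauUp T M a ω) : M ω (tauUp T M a ω) ≤ a := by
  have hτ_mem : tauUp T M a ω ∈ closure (Ico 0 (tauUp T M a ω)) := by
    rw [closure_Ico hτ.ne]
    exact ⟨hτ.le, le_rfl⟩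
  have hsub : Ico 0 (tauUp T M a ω) ⊆ Icc 0 T :=
    Ico_subset_Icc_self.trans (Icc_subset_Icc_right (tauUp_le_right ω))
  have := ((hc _ ⟨hτ.le, tauUp_le_right ω⟩).mono hsub).mem_closure hτ_mem
    (t := Iic a) fun s hs => apply_le_of_lt_tauUp hs.1 hs.2
  rwa [closure_Iic] at this

lemma le_apply_tauUp (hτ : tauUp T M a ω < T) : a ≤ M ω (tauUp T M a ω) := by
  have := ((hc _ (tauUp_mem_Icc_of_lt hτ)).mono (sep_subset _ _)).mem_closure
    (tauUp_mem_closure hτ) (t := Ici a) fun s hs => hs.2.le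
  rwa [closure_Ici] at this

lemma apply_tauUp_mem_Icc (hτ : tauUp T M a ω < T) :
    M ω (tauUp T M a ω) ∈ Icc a (max a (M ω 0)) := by
  refine ⟨le_apply_tauUp hc hτ, ?_⟩
  rcases (tauUp_mem_Icc_of_lt hτ).1.eq_or_lt with h | h
  · rw [← h]
    exact le_max_right _ _
  · exact le_max_of_le_left (apply_tauUp_le hc h)

variable {t : ℝ} (ht : t ≤ T)
include ht

lemma apply_min_tauUp_mem_Icc_of_tauUp_lt (h : tauUp T M a ω < t) :
    M ω (min t (tauUp T M a ω)) ∈ Icc a (max a (M ω 0)) := by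
  rw [min_eq_right h.le]
  exact apply_tauUp_mem_Icc hc (h.trans_le ht)

lemma apply_min_tauUp_mem_Icc :
    M ω (min t (tauUp T M a ω)) ∈ Icc (min (M ω t) a) (max (M ω t) (max a (M ω 0))) := by
  rcases le_or_gt t (tauUp T M a ω) with h | h
  · rw [min_eq_left h]
    exact ⟨min_le_left _ _, le_max_left _ _⟩
  · obtain ⟨h₁, h₂⟩ := apply_min_tauUp_mem_Icc_of_tauUp_lt hc ht h
    exact ⟨(min_le_right _ _).trans h₁, h₂.trans (le_max_right _ _)⟩

end tauUp

theorem stmt_1_general {E : Type*} [MetricSpace E] (T : ℝ)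
    (M : E → ℝ → ℝ)
    (hM : ContinuousOn (fun p : E × ℝ => M p.1 p.2) (Set.univ ×ˢ Set.Icc 0 T))
    (a : ℝ) (t : ℝ) (ht : t ∈ Set.Icc 0 T)
    (ω₀ : E) (hω₀ : M ω₀ (min t (tauUp T M a ω₀)) = a) :
    ContinuousAt (fun ω => M ω (min t (tauUp T M a ω))) ω₀ := by
  have hpath (ω : E) : ContinuousOn (M ω) (Icc 0 T) := hM.uncurry_left ω (mem_univ ω)
  have hslice {r : ℝ} (hr : r ∈ Icc 0 T) : Continuous fun ω => M ω r :=
    continuousOn_univ.mp (hM.uncurry_right r hr)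
  have h₀ : M ω₀ 0 ≤ a :=
    apply_zero_le_of_le_tauUp (le_min ht.1 (tauUp_nonneg (ht.1.trans ht.2) ω₀))
      (min_le_right _ _) hω₀.le
  have hupper : Tendsto (fun ω => max a (M ω 0)) (𝓝 ω₀) (𝓝 a) := by
    have := tendsto_const_nhds (x := a).max ((hslice ⟨le_rfl, ht.1.trans ht.2⟩).tendsto ω₀)
    rwa [max_eq_left h₀] at this
  rw [ContinuousAt, hω₀]
  rcases le_or_gt t (tauUp T M a ω₀) with hle | hlt
  · rw [min_eq_left hle] at hω₀
    have hMt : Tendsto (fun ω => M ω t) (𝓝 ω₀) (𝓝 a) := hω₀ ▸ (hslice ht).tendsto ω₀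
    exact tendsto_of_tendsto_of_tendsto_of_le_of_le
      (by simpa using hMt.min (tendsto_const_nhds (x := a))) (by simpa using hMt.max hupper)
      (fun ω => (apply_min_tauUp_mem_Icc (hpath ω) ht.2).1)
      (fun ω => (apply_min_tauUp_mem_Icc (hpath ω) ht.2).2)
  · obtain ⟨r, hr, hrt, har⟩ := exists_lt_of_tauUp_lt ht.2 hlt
    have hbounds : ∀ᶠ ω in 𝓝 ω₀, M ω (min t (tauUp T M a ω)) ∈ Icc a (max a (M ω 0)) :=
      ((hslice hr).tendsto ω₀).eventually (lt_mem_nhds har) |>.mono fun ω h =>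
        apply_min_tauUp_mem_Icc_of_tauUp_lt (hpath ω) ht.2 ((tauUp_le hr h).trans_lt hrt)
    exact tendsto_of_tendsto_of_tendsto_of_le_of_le' tendsto_const_nhds hupper
      (hbounds.mono fun _ h => h.1) (hbounds.mono fun _ h => h.2)

theorem stmt_1 {E : Type*} [MetricSpace E] (T : ℝ) (hT : 0 < T)
    (M : E → ℝ → ℝ)
    (hM : ContinuousOn (fun p : E × ℝ => M p.1 p.2) (Set.univ ×ˢ Set.Icc 0 T))
    (a : ℝ) (t : ℝ) (ht : t ∈ Set.Icc 0 T)
    (ω₀ : E) (hω₀ : M ω₀ (min t (tauUp T M a ω₀)) = a) :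
    ContinuousAt (fun ω => M ω (min t (tauUp T M a ω))) ω₀ :=
  stmt_1_general T M hM a t ht ω₀ hω₀
end

section
/- For every closed set F ⊆ Ω one has c(F) = inf{ c(O) : O ⊆ Ω open, F ⊆ O }. -/
/-!
The open thickenings of `F` lie inside its closed `1/(n+1)`-thickenings `Fₙ`, whose measures
decrease to `P F` for every `P`. By the portmanteau theorem `P ↦ P Fₙ` is upper semicontinuous,
so on the compact set `𝔓` the decreasing infimum over `n` commutes with the supremum over `P`.
-/

open MeasureTheory Filter Metric Set Topology

theorem IsCompact.iInf_iSup₂_eq_iSup₂_iInf {X ι α : Type*} [TopologicalSpace X] [Preorder ι]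
    [IsDirectedOrder ι] [Nonempty ι] [CompleteLinearOrder α] {K : Set X} (hK : IsCompact K)
    {f : ι → X → α} (hf : ∀ i, UpperSemicontinuousOn (f i) K) (hanti : Antitone f) :
    ⨅ i, ⨆ x ∈ K, f i x = ⨆ x ∈ K, ⨅ i, f i x := by
  refine le_antisymm ?_ (iSup₂_le fun x hx => iInf_mono fun i => le_iSup₂_of_le x hx le_rfl)
  rcases K.eq_empty_or_nonempty with rfl | hK₀
  · simp
  set c := ⨅ i, ⨆ x ∈ K, f i x
  -- Each `f i` attains its supremum `≥ c` on `K`, so the sets `{c ≤ f i}` meet `K` in a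
  -- decreasing family of nonempty compact sets.
  obtain ⟨x, hxK, hx⟩ : (K ∩ ⋂ i ∈ univ, f i ⁻¹' Ici c).Nonempty := by
    rw [nonempty_iff_ne_empty, Ne,
      UpperSemicontinuousOn.inter_biInter_preimage_Ici_eq_empty_iff_exists_finset hK
        fun i _ => hf i]
    rintro ⟨u, hu⟩
    obtain ⟨j, hj⟩ := (u.map (Function.Embedding.subtype _)).exists_le
    obtain ⟨y, hyK, hy⟩ := (hf j).exists_isMaxOn hK₀ hK
    obtain ⟨i, hiu, hi⟩ := hu y hyK
    have hcy : c ≤ f j y := (iInf_le _ j).trans (iSup₂_le fun z hz => hy hz)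
    exact (hcy.trans (hanti (hj _ (Finset.mem_map_of_mem _ hiu)) y)).not_gt hi
  exact le_iSup₂_of_le x hxK (le_iInf fun i => by simpa using mem_iInter₂.1 hx i (mem_univ i))

theorem MeasureTheory.ProbabilityMeasure.upperSemicontinuous_apply_of_isClosed {Ω : Type*}
    [MeasurableSpace Ω] [TopologicalSpace Ω] [OpensMeasurableSpace Ω] [HasOuterApproxClosed Ω]
    {F : Set Ω} (hF : IsClosed F) :
    UpperSemicontinuous fun P : ProbabilityMeasure Ω => (P : Measure Ω) F :=
  upperSemicontinuous_iff_limsup_le.2 fun _ => limsup_measure_closed_le_of_tendsto tendsto_id hF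

theorem MeasureTheory.iInf_measure_cthickening_of_isClosed {Ω ι : Type*} [PseudoMetricSpace Ω]
    [MeasurableSpace Ω] [OpensMeasurableSpace Ω] {μ : Measure Ω} [IsFiniteMeasure μ]
    {l : Filter ι} [l.NeBot] {r : ι → ℝ} (hr : Tendsto r l (𝓝 0)) {F : Set Ω}
    (hF : IsClosed F) :
    ⨅ i, μ (cthickening (r i) F) = μ F :=
  le_antisymm
    (ge_of_tendsto' ((tendsto_measure_cthickening_of_isClosed
      ⟨1, one_pos, measure_ne_top _ _⟩ hF).comp hr) fun i => iInf_le _ i)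
    (le_iInf fun _ => measure_mono (self_subset_cthickening F))

theorem stmt_6_general {Ω : Type*} [MetricSpace Ω] [MeasurableSpace Ω] [BorelSpace Ω]
    (𝔓 : Set (ProbabilityMeasure Ω)) (hcomp : IsCompact 𝔓)
    (F : Set Ω) (hF : IsClosed F) :
    (⨆ P ∈ 𝔓, (P : Measure Ω) F) =
      ⨅ O ∈ {O : Set Ω | IsOpen O ∧ F ⊆ O}, ⨆ P ∈ 𝔓, (P : Measure Ω) O := by
  set r : ℕ → ℝ := fun n => 1 / (n + 1)
  have hr : Antitone r := fun m n hmn => by dsimp only [r]; gcongr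
  have hr₀ : Tendsto r atTop (𝓝 0) := tendsto_one_div_add_atTop_nhds_zero_nat
  refine le_antisymm (le_iInf₂ fun O hO => iSup₂_mono fun P _ => measure_mono hO.2) ?_
  calc ⨅ O ∈ {O : Set Ω | IsOpen O ∧ F ⊆ O}, ⨆ P ∈ 𝔓, (P : Measure Ω) O
      ≤ ⨅ n, ⨆ P ∈ 𝔓, (P : Measure Ω) (cthickening (r n) F) :=
        le_iInf fun n =>
          (iInf₂_le _ ⟨isOpen_thickening, self_subset_thickening (by positivity) F⟩).trans
            (iSup₂_mono fun P _ => measure_mono (thickening_subset_cthickening _ F))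
    _ = ⨆ P ∈ 𝔓, ⨅ n, (P : Measure Ω) (cthickening (r n) F) :=
        hcomp.iInf_iSup₂_eq_iSup₂_iInf
          (fun n => (ProbabilityMeasure.upperSemicontinuous_apply_of_isClosed
            isClosed_cthickening).upperSemicontinuousOn _)
          fun m n hmn P => measure_mono (cthickening_mono (hr hmn) F)
    _ = ⨆ P ∈ 𝔓, (P : Measure Ω) F := by
        simp only [iInf_measure_cthickening_of_isClosed hr₀ hF]

/-- For a nonempty set `𝔓` of Borel probability measures on a metric space `Ω` which is
compact in the topology of weak convergence, the capacity `c(A) := ⨆ P ∈ 𝔓, P(A)` of any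
closed set `F` equals the infimum of the capacities of open sets containing `F`. -/
theorem stmt_6 {Ω : Type*} [MetricSpace Ω] [MeasurableSpace Ω] [BorelSpace Ω]
    (𝔓 : Set (ProbabilityMeasure Ω)) (h𝔓 : 𝔓.Nonempty) (hcomp : IsCompact 𝔓)
    (F : Set Ω) (hF : IsClosed F) :
    (⨆ P ∈ 𝔓, (P : Measure Ω) F) =
      ⨅ O ∈ {O : Set Ω | IsOpen O ∧ F ⊆ O}, ⨆ P ∈ 𝔓, (P : Measure Ω) O :=
  stmt_6_general 𝔓 hcomp F hF
end

section
/- For every stopping time σ with σ ≤ T and all real numbers n > 0 and δ > 0, one has E[|M_σ|^p · 1_{{|M_σ| > n}}] ≤ δ^p n^{-p} E[|M_T|^p] + E[|M_T|^p · 1_{{|M_T| > δ}}]. -/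
/-!
The dyadic upper approximations `τₖ = min (⌈2ᵏ σ⌉ / 2ᵏ) T` of `σ` are stopping times with
countably many values, so optional sampling gives `M_{τₖ} = E[M_T | ℱ_{τₖ}]`. For a conditional
expectation `Z = E[X | 𝒢]`, conditional Jensen on the `𝒢`-measurable set `{|Z| > n}` and Markov's
inequality give
`E[|Z|^p; |Z| > n] ≤ E[|X|^p; |Z| > n] ≤ δ^p P(|Z| > n) + E[|X|^p; |X| > δ]`
`                  ≤ δ^p n^{-p} E[|X|^p] + E[|X|^p; |X| > δ]`.
Right continuity gives `M_{τₖ} → M_σ` pointwise, and since `x ↦ |x|^p 1_{|x| > n}` is lower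
semicontinuous, Fatou's lemma carries the bound over to `M_σ`.
-/

open MeasureTheory Set Filter Topology
open scoped ENNReal

section TailEstimates

variable {Ω : Type*} {m mΩ : MeasurableSpace Ω} {μ : Measure Ω} {p : ℝ}

theorem integrable_rpow_abs_condExp (hp : 1 ≤ p) {X : Ω → ℝ}
    (hX : Integrable (fun ω => |X ω| ^ p) μ) :
    Integrable (fun ω => |μ[X|m] ω| ^ p) μ := by
  refine (integrable_condExp (m := m) (f := fun ω => |X ω| ^ p)).mono' ?_ ?_
  · exact ((integrable_condExp (m := m) (f := X) (μ := μ)).1.aemeasurable.abs.pow_const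
      p).aestronglyMeasurable
  · filter_upwards [Integrable.norm_condExp_rpow_le (m := m) (f := X) hp (by simpa using hX)]
      with ω hω
    simpa [abs_of_nonneg (Real.rpow_nonneg (abs_nonneg _) p)] using hω

theorem setIntegral_rpow_abs_le_add [IsFiniteMeasure μ] (hp : 0 ≤ p) {X : Ω → ℝ}
    (hXm : AEStronglyMeasurable X μ) (hX : Integrable (fun ω => |X ω| ^ p) μ)
    {A : Set Ω} (hA : MeasurableSet A) {δ : ℝ} (hδ : 0 ≤ δ) :
    ∫ ω in A, |X ω| ^ p ∂μ ≤ δ ^ p * μ.real A + ∫ ω in {ω | δ < |X ω|}, |X ω| ^ p ∂μ := by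
  set B := {ω | δ < |X ω|}
  have hB : NullMeasurableSet B μ :=
    nullMeasurableSet_lt aemeasurable_const hXm.aemeasurable.abs
  have hBint : Integrable (B.indicator fun ω => |X ω| ^ p) μ := hX.indicator₀ hB
  calc ∫ ω in A, |X ω| ^ p ∂μ
      ≤ ∫ ω in A, (δ ^ p + B.indicator (fun ω => |X ω| ^ p) ω) ∂μ := by
        refine setIntegral_mono_on hX.integrableOn
          ((integrable_const _).add hBint).integrableOn hA fun ω _ => ?_
        by_cases hω : ω ∈ B
        · simp [indicator_of_mem hω, Real.rpow_nonneg hδ]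
        · simp only [indicator_of_notMem hω, add_zero]
          exact Real.rpow_le_rpow (abs_nonneg _) (not_lt.1 hω) hp
    _ = δ ^ p * μ.real A + ∫ ω in A, B.indicator (fun ω => |X ω| ^ p) ω ∂μ := by
        rw [integral_add (integrable_const _) hBint.integrableOn, setIntegral_const, smul_eq_mul,
          mul_comm]
    _ ≤ δ ^ p * μ.real A + ∫ ω in B, |X ω| ^ p ∂μ := by
        grw [setIntegral_le_integral hBint
          (ae_of_all _ <| indicator_nonneg fun ω _ => by positivity), integral_indicator₀ hB]

theorem setIntegral_rpow_abs_condExp_gt_le (hm : m ≤ mΩ) [IsFiniteMeasure μ] (hp : 1 ≤ p)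
    {X : Ω → ℝ} (hXm : AEStronglyMeasurable X μ) (hX : Integrable (fun ω => |X ω| ^ p) μ)
    {n δ : ℝ} (hn : 0 < n) (hδ : 0 ≤ δ) :
    ∫ ω in {ω | n < |μ[X|m] ω|}, |μ[X|m] ω| ^ p ∂μ ≤
      δ ^ p * n ^ (-p) * ∫ ω, |X ω| ^ p ∂μ + ∫ ω in {ω | δ < |X ω|}, |X ω| ^ p ∂μ := by
  set A := {ω | n < |μ[X|m] ω|}
  have hA_m : MeasurableSet[m] A :=
    (measurable_abs.comp stronglyMeasurable_condExp.measurable) measurableSet_Ioi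
  have hA : MeasurableSet A := hm _ hA_m
  have hjensen : ∫ ω in A, |μ[X|m] ω| ^ p ∂μ ≤ ∫ ω in A, |X ω| ^ p ∂μ := by
    simpa only [Real.norm_eq_abs] using
      setIntegral_norm_condExp_rpow_le (f := X) hp hA_m (by simpa only [Real.norm_eq_abs] using hX)
  have hmarkov : n ^ p * μ.real A ≤ ∫ ω, |X ω| ^ p ∂μ := calc
    n ^ p * μ.real A ≤ ∫ ω in A, |μ[X|m] ω| ^ p ∂μ :=
        setIntegral_ge_of_const_le_real hA (measure_ne_top _ _)
          (fun ω hω => Real.rpow_le_rpow hn.le (le_of_lt hω) (by linarith))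
          (integrable_rpow_abs_condExp hp hX).integrableOn
    _ ≤ ∫ ω in A, |X ω| ^ p ∂μ := hjensen
    _ ≤ ∫ ω, |X ω| ^ p ∂μ := setIntegral_le_integral hX (ae_of_all _ fun ω => by positivity)
  have hPA : μ.real A ≤ n ^ (-p) * ∫ ω, |X ω| ^ p ∂μ := by
    rw [Real.rpow_neg hn.le, ← div_eq_inv_mul, le_div_iff₀ (by positivity), mul_comm]
    exact hmarkov
  calc ∫ ω in A, |μ[X|m] ω| ^ p ∂μ ≤ ∫ ω in A, |X ω| ^ p ∂μ := hjensen
    _ ≤ δ ^ p * μ.real A + ∫ ω in {ω | δ < |X ω|}, |X ω| ^ p ∂μ :=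
        setIntegral_rpow_abs_le_add (by linarith) hXm hX hA hδ
    _ ≤ _ := by grw [hPA, mul_assoc]

theorem setIntegral_rpow_abs_gt_le_of_tendsto (hp : 0 ≤ p) {Z : ℕ → Ω → ℝ} {Y : Ω → ℝ}
    (hZm : ∀ k, AEStronglyMeasurable (Z k) μ) (hZ : ∀ k, Integrable (fun ω => |Z k ω| ^ p) μ)
    (hlim : ∀ᵐ ω ∂μ, Tendsto (fun k => Z k ω) atTop (𝓝 (Y ω))) {n C : ℝ}
    (hC : ∀ k, ∫ ω in {ω | n < |Z k ω|}, |Z k ω| ^ p ∂μ ≤ C) :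
    ∫ ω in {ω | n < |Y ω|}, |Y ω| ^ p ∂μ ≤ C := by
  have hYm : AEStronglyMeasurable Y μ := aestronglyMeasurable_of_tendsto_ae atTop hZm hlim
  set F : (Ω → ℝ) → Ω → ℝ≥0∞ := fun W =>
    {ω | n < |W ω|}.indicator fun ω => ENNReal.ofReal (|W ω| ^ p)
  have hS : ∀ W : Ω → ℝ, AEStronglyMeasurable W μ → NullMeasurableSet {ω | n < |W ω|} μ :=
    fun W hW => nullMeasurableSet_lt aemeasurable_const hW.aemeasurable.abs
  have hF_meas : ∀ W, AEStronglyMeasurable W μ → AEMeasurable (F W) μ := fun W hW =>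
    (ENNReal.measurable_ofReal.comp_aemeasurable (hW.aemeasurable.abs.pow_const p)).indicator₀
      (hS W hW)
  have hF_Z : ∀ k, ∫⁻ ω, F (Z k) ω ∂μ ≤ ENNReal.ofReal C := fun k => by
    rw [lintegral_indicator₀ (hS _ (hZm k)), ← ofReal_integral_eq_lintegral_ofReal
      (hZ k).integrableOn (ae_of_all _ fun ω => by positivity)]
    exact ENNReal.ofReal_le_ofReal (hC k)
  have hF_liminf : ∀ᵐ ω ∂μ, F Y ω ≤ liminf (fun k => F (Z k) ω) atTop := by
    filter_upwards [hlim] with ω hω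
    by_cases hY : n < |Y ω|
    · have habs := hω.abs
      have hF_tendsto : Tendsto (fun k => F (Z k) ω) atTop (𝓝 (ENNReal.ofReal (|Y ω| ^ p))) := by
        refine ((ENNReal.continuous_ofReal.tendsto _).comp
          (((Real.continuous_rpow_const hp).tendsto _).comp habs)).congr' ?_
        filter_upwards [habs.eventually (lt_mem_nhds hY)] with k hk
        exact (indicator_of_mem (s := {ω | n < |Z k ω|}) hk
          (fun ω => ENNReal.ofReal (|Z k ω| ^ p))).symm
      simp only [F, indicator_of_mem (s := {ω | n < |Y ω|}) hY, hF_tendsto.liminf_eq, le_refl]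
    · simp [F, indicator_of_notMem (s := {ω | n < |Y ω|}) hY]
  have hC0 : 0 ≤ C := (integral_nonneg fun ω => by positivity).trans (hC 0)
  rw [integral_eq_lintegral_of_nonneg_ae (ae_of_all _ fun ω => by positivity)
    (hYm.aemeasurable.abs.pow_const p).aestronglyMeasurable.restrict,
    ← lintegral_indicator₀ (hS Y hYm)]
  refine ENNReal.toReal_le_of_le_ofReal hC0 ?_
  calc ∫⁻ ω, F Y ω ∂μ ≤ ∫⁻ ω, liminf (fun k => F (Z k) ω) atTop ∂μ := lintegral_mono_ae hF_liminf
    _ ≤ liminf (fun k => ∫⁻ ω, F (Z k) ω ∂μ) atTop :=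
        lintegral_liminf_le' fun k => hF_meas _ (hZm k)
    _ ≤ ENNReal.ofReal C := liminf_le_of_frequently_le' (Frequently.of_forall hF_Z)

end TailEstimates

namespace MeasureTheory.Filtration

variable {Ω ι κ : Type*} {mΩ : MeasurableSpace Ω} [Preorder ι] [Preorder κ]

def reindex (ℱ : Filtration ι mΩ) (g : κ → ι) (hg : Monotone g) : Filtration κ mΩ where
  seq i := ℱ (g i)
  mono' _ _ h := ℱ.mono (hg h)
  le' i := ℱ.le (g i)

end MeasureTheory.Filtration

section OptionalSampling

variable {Ω ι : Type*} {mΩ : MeasurableSpace Ω} {P : Measure Ω}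

theorem martingale_restrict_Icc [Preorder ι] {ℱ : Filtration ι mΩ} {M : ι → Ω → ℝ} {a b : ι}
    (hadp : Adapted ℱ M)
    (hmart : ∀ s t : ι, a ≤ s → s ≤ t → t ≤ b → P[M t | ℱ s] =ᵐ[P] M s) :
    Martingale (fun t : Icc a b => M t) (ℱ.reindex ((↑) : Icc a b → ι) (Subtype.mono_coe _)) P :=
  ⟨fun t => (hadp t).stronglyMeasurable, fun s t hst => hmart s t s.2.1 hst t.2.2⟩

theorem exists_ae_eq_condExp_of_countable_range [IsFiniteMeasure P] {ℱ : Filtration ℝ mΩ}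
    {M : ℝ → Ω → ℝ} {T : ℝ} (hT : 0 ≤ T) (hadp : Adapted ℱ M)
    (hmart : ∀ s t : ℝ, 0 ≤ s → s ≤ t → t ≤ T → P[M t | ℱ s] =ᵐ[P] M s)
    {τ : Ω → ℝ} (hτ : IsStoppingTime ℱ (fun ω => (τ ω : WithTop ℝ)))
    (hτT : ∀ ω, τ ω ∈ Icc 0 T) (hτ_range : (range τ).Countable) :
    ∃ m ≤ mΩ, (fun ω => M (τ ω) ω) =ᵐ[P] P[M T | m] := by
  let τ' : Ω → WithTop (Icc 0 T) := fun ω => (⟨τ ω, hτT ω⟩ : Icc 0 T)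
  have hτ' : IsStoppingTime (ℱ.reindex ((↑) : Icc 0 T → ℝ) (Subtype.mono_coe _)) τ' := fun i => by
    have hset : {ω | τ' ω ≤ i} = {ω | (τ ω : WithTop ℝ) ≤ (i : ℝ)} := by
      ext ω
      simp [τ', ← Subtype.coe_le_coe]
    rw [hset]
    exact hτ i
  have hτ'_le : ∀ ω, τ' ω ≤ (⟨T, hT, le_rfl⟩ : Icc 0 T) := fun ω =>
    WithTop.coe_le_coe.2 (Subtype.mk_le_mk.2 (hτT ω).2)
  have hτ'_range : (range τ').Countable := by
    refine ((hτ_range.preimage Subtype.val_injective).image WithTop.some).mono ?_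
    rintro _ ⟨ω, rfl⟩
    exact ⟨_, ⟨ω, rfl⟩, rfl⟩
  have : Nonempty (Icc 0 T) := ⟨⟨T, hT, le_rfl⟩⟩
  exact ⟨_, hτ'.measurableSpace_le_of_le hτ'_le,
    (martingale_restrict_Icc hadp hmart).stoppedValue_ae_eq_condExp_of_le_const_of_countable_range
      hτ' hτ'_le hτ'_range⟩

end OptionalSampling

noncomputable def dyadicCeil (k : ℕ) (x : ℝ) : ℝ := ⌈2 ^ k * x⌉ / 2 ^ k

section DyadicCeil

variable (k : ℕ) (x : ℝ)

theorem le_dyadicCeil : x ≤ dyadicCeil k x := by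
  rw [dyadicCeil, le_div_iff₀ (by positivity), mul_comm]
  exact Int.le_ceil _

theorem dyadicCeil_lt_add : dyadicCeil k x < x + (2 ^ k)⁻¹ := by
  rw [dyadicCeil, div_lt_iff₀ (by positivity), add_mul, inv_mul_cancel₀ (by positivity), mul_comm]
  exact Int.ceil_lt_add_one _

theorem dyadicCeil_le_iff {t : ℝ} : dyadicCeil k x ≤ t ↔ x ≤ ⌊2 ^ k * t⌋ / 2 ^ k := by
  rw [dyadicCeil, div_le_iff₀ (by positivity), le_div_iff₀ (by positivity), mul_comm x,
    ← Int.ceil_le, ← Int.le_floor, mul_comm t]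

theorem countable_range_dyadicCeil : (range (dyadicCeil k)).Countable :=
  (countable_range fun z : ℤ => (z : ℝ) / 2 ^ k).mono <| by
    rintro _ ⟨x, rfl⟩
    exact ⟨_, rfl⟩

theorem tendsto_dyadicCeil : Tendsto (fun k => dyadicCeil k x) atTop (𝓝[≥] x) := by
  refine tendsto_nhdsWithin_iff.2 ⟨?_, Eventually.of_forall fun k => le_dyadicCeil k x⟩
  have h : Tendsto (fun k : ℕ => x + ((2 : ℝ) ^ k)⁻¹) atTop (𝓝 x) := by
    simpa using tendsto_const_nhds.add
      (tendsto_inv_atTop_zero.comp (tendsto_pow_atTop_atTop_of_one_lt (one_lt_two : (1 : ℝ) < 2)))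
  exact tendsto_of_tendsto_of_tendsto_of_le_of_le tendsto_const_nhds h
    (fun k => le_dyadicCeil k x) fun k => (dyadicCeil_lt_add k x).le

end DyadicCeil

theorem tendsto_min_dyadicCeil {x T : ℝ} (hxT : x ≤ T) :
    Tendsto (fun k => min (dyadicCeil k x) T) atTop (𝓝[≥] x) := by
  refine tendsto_nhdsWithin_iff.2 ⟨?_, Eventually.of_forall fun k =>
    le_min (le_dyadicCeil k x) hxT⟩
  simpa [min_eq_left hxT] using
    ((tendsto_dyadicCeil x).mono_right nhdsWithin_le_nhds).min (tendsto_const_nhds (x := T))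

theorem MeasureTheory.IsStoppingTime.dyadicCeil {Ω : Type*} {mΩ : MeasurableSpace Ω}
    {ℱ : Filtration ℝ mΩ} {σ : Ω → ℝ} (hσ : IsStoppingTime ℱ (fun ω => (σ ω : WithTop ℝ)))
    (k : ℕ) : IsStoppingTime ℱ (fun ω => (_root_.dyadicCeil k (σ ω) : WithTop ℝ)) := fun t => by
  have hset : {ω | (_root_.dyadicCeil k (σ ω) : WithTop ℝ) ≤ t} =
      {ω | (σ ω : WithTop ℝ) ≤ ((⌊2 ^ k * t⌋ / 2 ^ k : ℝ) : WithTop ℝ)} := by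
    ext ω
    simp [dyadicCeil_le_iff]
  rw [hset]
  refine ℱ.mono ?_ _ (hσ _)
  rw [div_le_iff₀ (by positivity), mul_comm]
  exact Int.floor_le _

theorem stmt_7_general {Ω : Type*} {mΩ : MeasurableSpace Ω} {P : Measure Ω}
    [IsProbabilityMeasure P]
    (T : ℝ) (hT : 0 < T) (ℱ : Filtration ℝ mΩ)
    (p : ℝ) (hp : 1 ≤ p)
    (M : ℝ → Ω → ℝ)
    (hadp : Adapted ℱ M)
    (hmart : ∀ s t : ℝ, 0 ≤ s → s ≤ t → t ≤ T → P[M t | ℱ s] =ᵐ[P] M s)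
    (hrc : ∀ ω, ∀ t ∈ Set.Icc (0 : ℝ) T,
      ContinuousWithinAt (fun s => M s ω) (Set.Ici t) t)
    (hMT : Integrable (fun ω => |M T ω| ^ p) P)
    (σ : Ω → ℝ) (hσ : IsStoppingTime ℱ (fun ω => (σ ω : WithTop ℝ))) (hσT : ∀ ω, σ ω ∈ Set.Icc (0 : ℝ) T)
    (n δ : ℝ) (hn : 0 < n) (hδ : 0 < δ) :
    ∫ ω in {ω | n < |M (σ ω) ω|}, |M (σ ω) ω| ^ p ∂P ≤
      δ ^ p * n ^ (-p) * ∫ ω, |M T ω| ^ p ∂P +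
        ∫ ω in {ω | δ < |M T ω|}, |M T ω| ^ p ∂P := by
  set τ : ℕ → Ω → ℝ := fun k ω => min (dyadicCeil k (σ ω)) T
  have hτ : ∀ k, IsStoppingTime ℱ (fun ω => (τ k ω : WithTop ℝ)) := fun k => by
    simpa only [τ, WithTop.coe_min] using (hσ.dyadicCeil k).min_const T
  have hτT : ∀ k ω, τ k ω ∈ Icc 0 T := fun k ω =>
    ⟨le_min ((hσT ω).1.trans (le_dyadicCeil k _)) hT.le, min_le_right _ _⟩
  have hτ_range : ∀ k, (range (τ k)).Countable := fun k =>
    ((countable_range_dyadicCeil k).image (min · T)).mono <| by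
      rintro _ ⟨ω, rfl⟩
      exact ⟨_, ⟨σ ω, rfl⟩, rfl⟩
  choose m hm hM_eq using fun k =>
    exists_ae_eq_condExp_of_countable_range hT.le hadp hmart (hτ k) (hτT k) (hτ_range k)
  have hlim : ∀ᵐ ω ∂P, Tendsto (fun k => P[M T | m k] ω) atTop (𝓝 (M (σ ω) ω)) := by
    filter_upwards [ae_all_iff.2 hM_eq] with ω hω
    exact ((hrc ω _ (hσT ω)).tendsto.comp (tendsto_min_dyadicCeil (hσT ω).2)).congr hω
  have hMT_meas : AEStronglyMeasurable (M T) P :=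
    ((hadp T).mono (ℱ.le T) le_rfl).aestronglyMeasurable
  exact setIntegral_rpow_abs_gt_le_of_tendsto (by linarith)
    (fun k => integrable_condExp.aestronglyMeasurable) (fun k => integrable_rpow_abs_condExp hp hMT)
    hlim fun k => setIntegral_rpow_abs_condExp_gt_le (hm k) hp hMT_meas hMT hn hδ.le

/-- Doob-type uniform integrability estimate for the stopped values of a martingale
`(M_t)_{t ∈ [0,T]}` with right-continuous paths and `E[|M_T|^p] < ∞`:
for any stopping time `σ ≤ T` and any `n, δ > 0`,
`E[|M_σ|^p 1_{|M_σ| > n}] ≤ δ^p n^{-p} E[|M_T|^p] + E[|M_T|^p 1_{|M_T| > δ}]`. -/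
theorem stmt_7 {Ω : Type*} {mΩ : MeasurableSpace Ω} {P : Measure Ω}
    [IsProbabilityMeasure P]
    (T : ℝ) (hT : 0 < T) (ℱ : Filtration ℝ mΩ)
    (p : ℝ) (hp : 1 ≤ p)
    (M : ℝ → Ω → ℝ)
    (hadp : Adapted ℱ M)
    (hint : ∀ t ∈ Set.Icc (0 : ℝ) T, Integrable (M t) P)
    (hmart : ∀ s t : ℝ, 0 ≤ s → s ≤ t → t ≤ T → P[M t | ℱ s] =ᵐ[P] M s)
    (hrc : ∀ ω, ∀ t ∈ Set.Icc (0 : ℝ) T,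
      ContinuousWithinAt (fun s => M s ω) (Set.Ici t) t)
    (hMT : Integrable (fun ω => |M T ω| ^ p) P)
    (σ : Ω → ℝ) (hσ : IsStoppingTime ℱ (fun ω => (σ ω : WithTop ℝ))) (hσT : ∀ ω, σ ω ∈ Set.Icc (0 : ℝ) T)
    (n δ : ℝ) (hn : 0 < n) (hδ : 0 < δ) :
    ∫ ω in {ω | n < |M (σ ω) ω|}, |M (σ ω) ω| ^ p ∂P ≤
      δ ^ p * n ^ (-p) * ∫ ω, |M T ω| ^ p ∂P +
        ∫ ω in {ω | δ < |M T ω|}, |M T ω| ^ p ∂P :=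
  stmt_7_general T hT ℱ p hp M hadp hmart hrc hMT σ hσ hσT n δ hn hδ
end

section
/- Let a > m. Define pathwise τ̲_a := inf{t ∈ [0,T] : M_t ≥ a} ∧ T and τ̄_a := inf{t ∈ [0,T] : M_t > a} ∧ T (inf ∅ := +∞). Assume in addition that almost surely there is no nondegenerate interval [s,r] ⊆ [0,T] (s < r) on which M_t = a for all t ∈ [s,r]. Then τ̲_a = τ̄_a P-almost surely. -/
/-!
Both hitting times are optional times of the continuous martingale `M`, so optional sampling
(along grid approximations from above) gives `E[M (τ̲ ∧ t)] = E[M t] = E[M (τ̄ ∧ t)]`.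
Pathwise `M (τ̄ ∧ t) ≤ M (τ̲ ∧ t)`, because `M = a` at `τ̲ < T` while `M ≤ a` up to `τ̄`; hence
the two agree a.s., that is `M t = a` on `{τ̲ < t < τ̄}`. Doing this for all rational `t` at once,
continuity makes `M` constant equal to `a` on `(τ̲, τ̄)`, which the hypothesis on flat pieces
excludes unless `τ̲ = τ̄`.
-/

open MeasureTheory Set Filter Topology

section Hitting
variable {Ω β ι : Type*} {u : ι → Ω → β} {s : Set β} {n m : ι} {ω : Ω}

theorem sInf_sep_union_singleton_eq_hittingBtwn [ConditionallyCompleteLinearOrder ι] :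
    sInf ({i ∈ Icc n m | u i ω ∈ s} ∪ {m}) = hittingBtwn u s n m ω := by
  classical
  rw [hittingBtwn]
  split_ifs with h
  · obtain ⟨j, hj, hjs⟩ := h
    have hbdd : BddBelow {i ∈ Icc n m | u i ω ∈ s} := bddBelow_Icc.mono fun _ hi => hi.1
    rw [csInf_union hbdd ⟨j, hj, hjs⟩ bddBelow_singleton (singleton_nonempty m), csInf_singleton,
      min_eq_left ((csInf_le hbdd ⟨hj, hjs⟩).trans hj.2)]
    rfl
  · push Not at h
    rw [show {i ∈ Icc n m | u i ω ∈ s} = ∅ from eq_empty_of_forall_notMem fun i hi => h i hi.1 hi.2,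
      empty_union, csInf_singleton]

variable [ConditionallyCompleteLinearOrder ι] [TopologicalSpace ι] [OrderTopology ι]
  [TopologicalSpace β]

theorem apply_hittingBtwn_mem_of_isClosed (hs : IsClosed s)
    (hu : ContinuousOn (u · ω) (Icc n m)) (h : ∃ j ∈ Icc n m, u j ω ∈ s) :
    u (hittingBtwn u s n m ω) ω ∈ s := by
  classical
  rw [hittingBtwn, if_pos h]
  obtain ⟨j, hj, hjs⟩ := h
  exact ((hu.preimage_isClosed_of_isClosed isClosed_Icc hs).csInf_mem ⟨j, hj, hjs⟩
    (bddBelow_Icc.mono inter_subset_left)).2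

theorem apply_hittingBtwn_mem_of_compl_subset [DenselyOrdered ι] {C : Set β} (hC : IsClosed C)
    (hsC : sᶜ ⊆ C) (hn : u n ω ∈ C) (hnm : n ≤ m) (hu : ContinuousOn (u · ω) (Icc n m)) :
    u (hittingBtwn u s n m ω) ω ∈ C := by
  set τ := hittingBtwn u s n m ω
  have hτ : τ ∈ Icc n m := hittingBtwn_mem_Icc hnm ω
  rcases hτ.1.eq_or_lt with hnτ | hnτ
  · rwa [← hnτ]
  have hτcl : τ ∈ closure (Ico n τ) := by rw [closure_Ico hnτ.ne]; exact right_mem_Icc.2 hnτ.le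
  have hcw : ContinuousWithinAt (u · ω) (Ico n τ) τ :=
    (hu τ hτ).mono (Ico_subset_Icc_self.trans (Icc_subset_Icc_right hτ.2))
  refine closure_minimal ?_ hC (hcw.mem_closure_image hτcl)
  rintro _ ⟨j, hj, rfl⟩
  exact hsC (notMem_of_lt_hittingBtwn hj.2 hj.1)

end Hitting

section LevelAtHittingTime
variable {Ω : Type*} {M : ℝ → Ω → ℝ} {T a : ℝ} {ω : Ω}

theorem apply_hittingBtwn_Ici_eq (hcont : ContinuousOn (M · ω) (Icc 0 T)) (h0 : M 0 ω ≤ a)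
    (hlt : hittingBtwn M (Ici a) 0 T ω < T) : M (hittingBtwn M (Ici a) 0 T ω) ω = a := by
  obtain ⟨j, hj, hja⟩ := (hittingBtwn_lt_iff T le_rfl).1 hlt
  have hnm : (0 : ℝ) ≤ T := hj.1.trans hj.2.le
  refine le_antisymm ?_ ?_
  · exact apply_hittingBtwn_mem_of_compl_subset (C := Iic a) isClosed_Iic
      (compl_Ici.trans_subset Iio_subset_Iic_self) h0 hnm hcont
  · exact apply_hittingBtwn_mem_of_isClosed isClosed_Ici hcont ⟨j, Ico_subset_Icc_self hj, hja⟩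

theorem apply_min_hittingBtwn_Ioi_le (hcont : ContinuousOn (M · ω) (Icc 0 T)) (h0 : M 0 ω ≤ a)
    {t : ℝ} (ht : t ∈ Icc 0 T) : M (min (hittingBtwn M (Ioi a) 0 T ω) t) ω ≤ a := by
  rcases le_or_gt (hittingBtwn M (Ioi a) 0 T ω) t with h | h
  · rw [min_eq_left h]
    exact apply_hittingBtwn_mem_of_compl_subset (C := Iic a) isClosed_Iic
      compl_Ioi.subset h0 (ht.1.trans ht.2) hcont
  · rw [min_eq_right h.le]
    exact not_lt.1 (notMem_of_lt_hittingBtwn h ht.1)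

theorem apply_min_hittingBtwn_Ioi_le_apply_min_hittingBtwn_Ici
    (hcont : ContinuousOn (M · ω) (Icc 0 T)) (h0 : M 0 ω ≤ a) {t : ℝ} (ht : t ∈ Icc 0 T) :
    M (min (hittingBtwn M (Ioi a) 0 T ω) t) ω ≤ M (min (hittingBtwn M (Ici a) 0 T ω) t) ω := by
  have hle : hittingBtwn M (Ici a) 0 T ω ≤ hittingBtwn M (Ioi a) 0 T ω :=
    hittingBtwn_anti M 0 T Ioi_subset_Ici_self ω
  rcases le_or_gt t (hittingBtwn M (Ici a) 0 T ω) with h | h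
  · rw [min_eq_right h, min_eq_right (h.trans hle)]
  · rw [min_eq_left h.le, apply_hittingBtwn_Ici_eq hcont h0 (h.trans_le ht.2)]
    exact apply_min_hittingBtwn_Ioi_le hcont h0 ht

end LevelAtHittingTime

theorem ContinuousOn.eqOn_Ioo_of_rat {f : ℝ → ℝ} {α β c : ℝ} (hf : ContinuousOn f (Ioo α β))
    (h : ∀ q : ℚ, α < q → (q : ℝ) < β → f q = c) : EqOn f (fun _ => c) (Ioo α β) := by
  refine EqOn.of_subset_closure (s := Ioo α β ∩ range ((↑) : ℚ → ℝ)) ?_ hf continuousOn_const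
    inter_subset_left (Rat.denseRange_cast.open_subset_closure_inter isOpen_Ioo)
  rintro _ ⟨hx, q, rfl⟩
  exact h q hx.1 hx.2

theorem exists_le_iff_forall_rat_lt {X ι : Type*} [TopologicalSpace X] [CompactSpace X]
    {g : X → ℝ} (hg : Continuous g) {d : ι → X} (hd : DenseRange d) {b : ℝ} :
    (∃ x, b ≤ g x) ↔ ∀ c : ℚ, (c : ℝ) < b → ∃ i, (c : ℝ) < g (d i) := by
  constructor
  · rintro ⟨x, hx⟩ c hc
    exact hd.exists_mem_open (isOpen_lt continuous_const hg) ⟨x, hc.trans_le hx⟩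
  · intro h
    obtain ⟨c₀, hc₀⟩ := exists_rat_lt b
    obtain ⟨i₀, -⟩ := h c₀ hc₀
    obtain ⟨x, -, hx⟩ := isCompact_univ.exists_isMaxOn ⟨d i₀, mem_univ _⟩
      hg.continuousOn
    refine ⟨x, not_lt.1 fun hxb => ?_⟩
    obtain ⟨c, hxc, hcb⟩ := exists_rat_btwn hxb
    obtain ⟨i, hi⟩ := h c hcb
    exact (hxc.trans hi).not_ge (hx (mem_univ _))

def MeasureTheory.Filtration.reindex_s14 {Ω ι κ : Type*} {m : MeasurableSpace Ω} [Preorder ι]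
    [Preorder κ] (ℱ : Filtration ι m) {g : κ → ι} (hg : Monotone g) : Filtration κ m :=
  ⟨fun k => ℱ (g k), fun _ _ h => ℱ.mono (hg h), fun _ => ℱ.le _⟩

theorem martingale_comp_projIcc {Ω : Type*} {mΩ : MeasurableSpace Ω} {μ : Measure Ω}
    {ℱ : Filtration ℝ mΩ} {M : ℝ → Ω → ℝ} {t₀ T : ℝ} (hT : t₀ ≤ T) (hadp : Adapted ℱ M)
    (hmart : ∀ s t, t₀ ≤ s → s ≤ t → t ≤ T → μ[M t | ℱ s] =ᵐ[μ] M s) :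
    Martingale (fun t => M (projIcc t₀ T hT t))
      (ℱ.reindex_s14 ((Subtype.mono_coe _).comp (monotone_projIcc hT))) μ :=
  ⟨fun _ => (hadp _).stronglyMeasurable, fun s t hst =>
    hmart _ _ (projIcc t₀ T hT s).2.1 (monotone_projIcc hT hst) (projIcc t₀ T hT t).2.2⟩

section Measurability
variable {Ω : Type*} {mΩ : MeasurableSpace Ω} {ℱ : Filtration ℝ mΩ} {M : ℝ → Ω → ℝ}
  {t₀ t : ℝ}

theorem measurableSet_exists_Icc_le (hadp : Adapted ℱ M)
    (hcont : ∀ ω, ContinuousOn (M · ω) (Icc t₀ t)) (ht : t₀ ≤ t) (b : ℝ) :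
    MeasurableSet[ℱ t] {ω | ∃ j ∈ Icc t₀ t, b ≤ M j ω} := by
  have hd : DenseRange fun q : ℚ => projIcc t₀ t ht q :=
    (projIcc_surjective ht).denseRange.comp Rat.denseRange_cast continuous_projIcc
  have hset : {ω | ∃ j ∈ Icc t₀ t, b ≤ M j ω} =
      ⋂ (c : ℚ) (_ : (c : ℝ) < b), ⋃ q : ℚ, {ω | (c : ℝ) < M (projIcc t₀ t ht q) ω} := by
    ext ω
    simpa only [mem_ofPred_eq, mem_iInter, mem_iUnion, Subtype.exists, exists_prop,
      domRestrict_apply] using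
      exists_le_iff_forall_rat_lt (b := b)
        (continuousOn_iff_continuous_domRestrict.1 (hcont ω)) hd
  rw [hset]
  refine .iInter fun c => .iInter fun _ => .iUnion fun q => ?_
  exact ℱ.mono (projIcc t₀ t ht q).2.2 _ (measurableSet_lt measurable_const (hadp _))

theorem measurableSet_exists_Ico_le (hadp : Adapted ℱ M)
    (hcont : ∀ ω, ContinuousOn (M · ω) (Icc t₀ t)) (b : ℝ) :
    MeasurableSet[ℱ t] {ω | ∃ j ∈ Ico t₀ t, b ≤ M j ω} := by
  have hset : {ω | ∃ j ∈ Ico t₀ t, b ≤ M j ω} =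
      ⋃ (r : ℚ) (_ : t₀ ≤ r ∧ (r : ℝ) < t), {ω | ∃ j ∈ Icc t₀ (r : ℝ), b ≤ M j ω} := by
    ext ω
    simp only [mem_ofPred_eq, mem_iUnion, exists_prop]
    constructor
    · rintro ⟨j, hj, hbj⟩
      obtain ⟨r, hjr, hrt⟩ := exists_rat_btwn hj.2
      exact ⟨r, ⟨hj.1.trans hjr.le, hrt⟩, j, ⟨hj.1, hjr.le⟩, hbj⟩
    · rintro ⟨r, ⟨-, hrt⟩, j, hj, hbj⟩
      exact ⟨j, ⟨hj.1, hj.2.trans_lt hrt⟩, hbj⟩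
  rw [hset]
  refine .iUnion fun r => .iUnion fun hr => ℱ.mono hr.2.le _ ?_
  exact measurableSet_exists_Icc_le hadp
    (fun ω => (hcont ω).mono (Icc_subset_Icc_right hr.2.le)) hr.1 b

theorem measurableSet_exists_Ico_lt (hadp : Adapted ℱ M)
    (hcont : ∀ ω, ContinuousOn (M · ω) (Icc t₀ t)) (b : ℝ) :
    MeasurableSet[ℱ t] {ω | ∃ j ∈ Ico t₀ t, b < M j ω} := by
  have hset : {ω | ∃ j ∈ Ico t₀ t, b < M j ω} =
      ⋃ (c : ℚ) (_ : b < c), {ω | ∃ j ∈ Ico t₀ t, (c : ℝ) ≤ M j ω} := by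
    ext ω
    simp only [mem_ofPred_eq, mem_iUnion, exists_prop]
    constructor
    · rintro ⟨j, hj, hbj⟩
      obtain ⟨c, hbc, hcj⟩ := exists_rat_btwn hbj
      exact ⟨c, hbc, j, hj, hcj.le⟩
    · rintro ⟨c, hbc, j, hj, hcj⟩
      exact ⟨j, hj, hbc.trans_le hcj⟩
  rw [hset]
  exact .iUnion fun c => .iUnion fun _ => measurableSet_exists_Ico_le hadp hcont c

theorem measurableSet_hittingBtwn_lt {T : ℝ} (hT : t₀ ≤ T) {s : Set ℝ}
    (hs : ∀ t ≤ T, MeasurableSet[ℱ t] {ω | ∃ j ∈ Ico t₀ t, M j ω ∈ s}) :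
    ∀ t, MeasurableSet[ℱ.reindex_s14 ((Subtype.mono_coe _).comp (monotone_projIcc hT)) t]
      {ω | hittingBtwn M s t₀ T ω < t} := by
  intro t
  rcases le_or_gt t t₀ with ht₀ | ht₀
  · convert MeasurableSet.empty
    exact eq_empty_of_forall_notMem fun ω hω => (le_hittingBtwn hT ω).not_gt (hω.trans_le ht₀)
  rcases le_or_gt t T with htT | htT
  · change MeasurableSet[ℱ (projIcc t₀ T hT t : ℝ)] _
    rw [projIcc_of_mem hT ⟨ht₀.le, htT⟩]
    simpa only [hittingBtwn_lt_iff t htT] using hs t htT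
  · convert MeasurableSet.univ
    exact eq_univ_of_forall fun ω => (hittingBtwn_le ω).trans_lt htT

end Measurability

/-- The first point of the grid `(n + 1)⁻¹ ℤ` strictly above `x`. -/
noncomputable def gridAbove (n : ℕ) (x : ℝ) : ℝ := (⌊x * (n + 1)⌋ + 1) / (n + 1)

section GridAbove
variable (n : ℕ) {x t : ℝ}

lemma lt_gridAbove : x < gridAbove n x := by
  rw [gridAbove, lt_div_iff₀ (by positivity)]
  exact Int.lt_floor_add_one _

lemma gridAbove_le : gridAbove n x ≤ x + 1 / (n + 1) := by
  rw [gridAbove, div_le_iff₀ (by positivity), add_mul, one_div_mul_cancel (by positivity)]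
  gcongr
  exact Int.floor_le _

lemma gridAbove_le_iff : gridAbove n x ≤ t ↔ x < ⌊t * (n + 1)⌋ / (n + 1) := by
  have hn : (0 : ℝ) < n + 1 := by positivity
  rw [gridAbove, div_le_iff₀ hn, lt_div_iff₀ hn, ← Int.cast_one, ← Int.cast_add,
    ← Int.le_floor, Int.add_one_le_iff, Int.floor_lt]

lemma tendsto_gridAbove (x : ℝ) : Tendsto (fun n => gridAbove n x) atTop (𝓝 x) := by
  have h : Tendsto (fun n : ℕ => x + 1 / ((n : ℝ) + 1)) atTop (𝓝 x) := by
    simpa using tendsto_one_div_add_atTop_nhds_zero_nat.const_add x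
  exact tendsto_of_tendsto_of_tendsto_of_le_of_le tendsto_const_nhds h
    (fun n => (lt_gridAbove n).le) (fun n => gridAbove_le n)

lemma range_gridAbove_countable : (range (gridAbove n)).Countable :=
  (countable_range fun k : ℤ => ((k : ℝ) + 1) / (n + 1)).mono <| by
    rintro _ ⟨x, rfl⟩; exact ⟨⌊x * (n + 1)⌋, rfl⟩

end GridAbove

theorem MeasureTheory.UniformIntegrable.tendsto_integral_of_ae_tendsto {Ω : Type*}
    {mΩ : MeasurableSpace Ω} {μ : Measure Ω} [IsFiniteMeasure μ] {F : ℕ → Ω → ℝ} {g : Ω → ℝ}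
    (hF : UniformIntegrable F 1 μ) (hFg : ∀ᵐ ω ∂μ, Tendsto (fun n => F n ω) atTop (𝓝 (g ω))) :
    Integrable g μ ∧ Tendsto (fun n => ∫ ω, F n ω ∂μ) atTop (𝓝 (∫ ω, g ω ∂μ)) := by
  have hg : MemLp g 1 μ := hF.memLp_of_ae_tendsto hFg
  refine ⟨memLp_one_iff_integrable.1 hg, tendsto_integral_of_L1' g hg.1
    (Eventually.of_forall fun n => memLp_one_iff_integrable.1 (hF.memLp n)) ?_⟩
  exact tendsto_Lp_finite_of_tendsto_ae le_rfl ENNReal.one_ne_top hF.1 hg hF.2.1 hFg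

section OptionalSampling
variable {Ω : Type*} {mΩ : MeasurableSpace Ω} {𝒢 : Filtration ℝ mΩ}

lemma isStoppingTime_gridAbove {ρ : Ω → ℝ} (hρ : ∀ t, MeasurableSet[𝒢 t] {ω | ρ ω < t})
    (n : ℕ) : IsStoppingTime 𝒢 fun ω => ((gridAbove n (ρ ω) : ℝ) : WithTop ℝ) := by
  intro t
  have hgrid : (⌊t * (n + 1)⌋ : ℝ) / (n + 1) ≤ t := by
    rw [div_le_iff₀ (by positivity)]; exact Int.floor_le _
  simp only [WithTop.coe_le_coe, gridAbove_le_iff]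
  exact 𝒢.mono hgrid _ (hρ _)

/-- The stopping times `gridAbove n ρ ∧ u` decrease to `ρ ∧ u`, and the values of `X` at them are
conditional expectations of `X u`, hence uniformly integrable. -/
theorem MeasureTheory.Martingale.integral_min_eq_of_measurableSet_lt {μ : Measure Ω}
    [IsFiniteMeasure μ] {X : ℝ → Ω → ℝ} (hX : Martingale X 𝒢 μ)
    (hcont : ∀ ω, Continuous (X · ω)) {ρ : Ω → ℝ}
    (hρ : ∀ t, MeasurableSet[𝒢 t] {ω | ρ ω < t}) (u : ℝ) :
    Integrable (fun ω => X (min (ρ ω) u) ω) μ ∧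
      ∫ ω, X (min (ρ ω) u) ω ∂μ = ∫ ω, X u ω ∂μ := by
  set τ : ℕ → Ω → WithTop ℝ := fun n ω => ((min (gridAbove n (ρ ω)) u : ℝ) : WithTop ℝ)
  have hτ n : IsStoppingTime 𝒢 (τ n) := by
    simpa [τ] using (isStoppingTime_gridAbove hρ n).min_const u
  have hτu n ω : τ n ω ≤ u := WithTop.coe_le_coe.2 (min_le_right _ _)
  have hτrange n : (range (τ n)).Countable := by
    refine (((range_gridAbove_countable n).insert u).image ((↑) : ℝ → WithTop ℝ)).mono ?_
    rintro _ ⟨ω, rfl⟩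
    refine ⟨_, ?_, rfl⟩
    rcases min_choice (gridAbove n (ρ ω)) u with h | h <;> rw [h]
    exacts [Or.inr ⟨_, rfl⟩, Or.inl rfl]
  have hsample n : stoppedValue X (τ n) =ᵐ[μ] μ[X u | (hτ n).measurableSpace] :=
    hX.stoppedValue_ae_eq_condExp_of_le_const_of_countable_range (hτ n) (hτu n) (hτrange n)
  have hlim : ∀ᵐ ω ∂μ, Tendsto (fun n => μ[X u | (hτ n).measurableSpace] ω) atTop
      (𝓝 (X (min (ρ ω) u) ω)) := by
    filter_upwards [ae_all_iff.2 hsample] with ω hω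
    simp_rw [← hω]
    exact ((hcont ω).tendsto _).comp ((tendsto_gridAbove (ρ ω)).min tendsto_const_nhds)
  obtain ⟨hint, htends⟩ := ((hX.integrable u).uniformIntegrable_condExp
    fun n => (hτ n).measurableSpace_le_of_le (hτu n)).tendsto_integral_of_ae_tendsto hlim
  refine ⟨hint, tendsto_nhds_unique htends ?_⟩
  simpa only [integral_condExp ((hτ _).measurableSpace_le_of_le (hτu _))]
    using tendsto_const_nhds

end OptionalSampling

section LevelBetweenHittingTimes
variable {Ω : Type*} {mΩ : MeasurableSpace Ω} {P : Measure Ω} [IsFiniteMeasure P]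
  {ℱ : Filtration ℝ mΩ} {M : ℝ → Ω → ℝ} {T a : ℝ}

theorem ae_apply_eq_of_hittingBtwn_lt_of_lt_hittingBtwn (hT : 0 ≤ T) (hadp : Adapted ℱ M)
    (hmart : ∀ s t, 0 ≤ s → s ≤ t → t ≤ T → P[M t | ℱ s] =ᵐ[P] M s)
    (hcont : ∀ ω, ContinuousOn (M · ω) (Icc 0 T)) (h0 : ∀ᵐ ω ∂P, M 0 ω ≤ a) {t : ℝ}
    (ht : t ∈ Icc 0 T) :
    ∀ᵐ ω ∂P, hittingBtwn M (Ici a) 0 T ω < t → t < hittingBtwn M (Ioi a) 0 T ω → M t ω = a := by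
  set X : ℝ → Ω → ℝ := fun r => M (projIcc 0 T hT r)
  have hX : Martingale X _ P := martingale_comp_projIcc hT hadp hmart
  have hXcont ω : Continuous (X · ω) := (hcont ω).comp_continuous
    (continuous_subtype_val.comp continuous_projIcc) fun r => (projIcc 0 T hT r).2
  have hXM {s : Set ℝ} ω :
      X (min (hittingBtwn M s 0 T ω) t) ω = M (min (hittingBtwn M s 0 T ω) t) ω := by
    simp only [X, projIcc_of_mem hT
      ⟨le_min (le_hittingBtwn hT ω) ht.1, (min_le_right _ _).trans ht.2⟩]
  have hcontIcc {r} (hr : r ≤ T) ω : ContinuousOn (M · ω) (Icc 0 r) :=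
    (hcont ω).mono (Icc_subset_Icc_right hr)
  obtain ⟨hint_low, hlow⟩ := hX.integral_min_eq_of_measurableSet_lt hXcont
    (measurableSet_hittingBtwn_lt (s := Ici a) hT fun r hr =>
      measurableSet_exists_Ico_le hadp (hcontIcc hr) a) t
  obtain ⟨hint_up, hup⟩ := hX.integral_min_eq_of_measurableSet_lt hXcont
    (measurableSet_hittingBtwn_lt (s := Ioi a) hT fun r hr =>
      measurableSet_exists_Ico_lt hadp (hcontIcc hr) a) t
  have hgap_nonneg : 0 ≤ᵐ[P] fun ω =>
      X (min (hittingBtwn M (Ici a) 0 T ω) t) ω - X (min (hittingBtwn M (Ioi a) 0 T ω) t) ω := by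
    filter_upwards [h0] with ω hω
    rw [Pi.zero_apply, hXM, hXM, sub_nonneg]
    exact apply_min_hittingBtwn_Ioi_le_apply_min_hittingBtwn_Ici (hcont ω) hω ht
  have hgap := (integral_eq_zero_iff_of_nonneg_ae hgap_nonneg (hint_low.sub hint_up)).1 <| by
    rw [integral_sub hint_low hint_up, hlow, hup, sub_self]
  filter_upwards [hgap, h0] with ω hω hω0 hlt hgt
  rw [Pi.zero_apply, hXM, hXM, min_eq_left hlt.le, min_eq_right hgt.le,
    apply_hittingBtwn_Ici_eq (hcont ω) hω0 (hlt.trans_le ht.2)] at hω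
  linarith

end LevelBetweenHittingTimes

theorem stmt_14_general {Ω : Type*} {mΩ : MeasurableSpace Ω} {P : Measure Ω}
    [IsProbabilityMeasure P]
    (T : ℝ) (hT : 0 < T) (ℱ : Filtration ℝ mΩ)
    (M : ℝ → Ω → ℝ)
    (hadp : Adapted ℱ M)
    (hmart : ∀ s t : ℝ, 0 ≤ s → s ≤ t → t ≤ T → P[M t | ℱ s] =ᵐ[P] M s)
    (hcont : ∀ ω, ContinuousOn (fun s => M s ω) (Set.Icc 0 T))
    (m : ℝ) (hM0 : ∀ᵐ ω ∂P, M 0 ω = m)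
    (a : ℝ) (ha : m < a)
    (hflat : ∀ᵐ ω ∂P, ¬ ∃ s r : ℝ, 0 ≤ s ∧ s < r ∧ r ≤ T ∧
      ∀ u ∈ Set.Icc s r, M u ω = a)
    (τlow τup : Ω → ℝ)
    (hτlow : ∀ ω, τlow ω = sInf ({s ∈ Set.Icc (0 : ℝ) T | a ≤ M s ω} ∪ {T}))
    (hτup : ∀ ω, τup ω = sInf ({s ∈ Set.Icc (0 : ℝ) T | a < M s ω} ∪ {T})) :
    τlow =ᵐ[P] τup := by
  obtain rfl : τlow = hittingBtwn M (Ici a) 0 T :=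
    funext fun ω => (hτlow ω).trans sInf_sep_union_singleton_eq_hittingBtwn
  obtain rfl : τup = hittingBtwn M (Ioi a) 0 T :=
    funext fun ω => (hτup ω).trans sInf_sep_union_singleton_eq_hittingBtwn
  have h0 : ∀ᵐ ω ∂P, M 0 ω ≤ a := hM0.mono fun ω h => h ▸ ha.le
  have hlevel : ∀ᵐ ω ∂P, ∀ q : ℚ, (q : ℝ) ∈ Icc 0 T → hittingBtwn M (Ici a) 0 T ω < q →
      q < hittingBtwn M (Ioi a) 0 T ω → M q ω = a := by
    refine ae_all_iff.2 fun q => ?_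
    by_cases hq : (q : ℝ) ∈ Icc 0 T
    · filter_upwards [ae_apply_eq_of_hittingBtwn_lt_of_lt_hittingBtwn hT.le hadp hmart hcont h0 hq]
        with ω hω _ using hω
    · exact Eventually.of_forall fun ω hq' => absurd hq' hq
  filter_upwards [hlevel, hflat] with ω hω hflatω
  refine le_antisymm (hittingBtwn_anti M 0 T Ioi_subset_Ici_self ω) (not_lt.1 fun hlt => hflatω ?_)
  have hIoo : Ioo (hittingBtwn M (Ici a) 0 T ω) (hittingBtwn M (Ioi a) 0 T ω) ⊆ Icc 0 T :=
    fun x hx => ⟨(le_hittingBtwn hT.le ω).trans hx.1.le, hx.2.le.trans (hittingBtwn_le ω)⟩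
  have hconst := ((hcont ω).mono hIoo).eqOn_Ioo_of_rat fun q h₁ h₂ => hω q (hIoo ⟨h₁, h₂⟩) h₁ h₂
  obtain ⟨s, hs₁, hs₂⟩ := exists_between hlt
  obtain ⟨r, hr₁, hr₂⟩ := exists_between hs₂
  exact ⟨s, r, (hIoo ⟨hs₁, hs₂⟩).1, hr₁, (hIoo ⟨hs₁.trans hr₁, hr₂⟩).2,
    fun x hx => hconst ⟨hs₁.trans_le hx.1, hx.2.trans_lt hr₂⟩⟩

/-- For a continuous-path martingale `(M_t)_{t ∈ [0,T]}` with `M_0 = m` a.s., `a > m`, and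
such that a.s. `M` is not identically `a` on any nondegenerate subinterval of `[0,T]`,
the pathwise hitting times `τ̲_a = inf{t ∈ [0,T] : M_t ≥ a} ∧ T` and
`τ̄_a = inf{t ∈ [0,T] : M_t > a} ∧ T` coincide almost surely. -/
theorem stmt_14 {Ω : Type*} {mΩ : MeasurableSpace Ω} {P : Measure Ω}
    [IsProbabilityMeasure P]
    (T : ℝ) (hT : 0 < T) (ℱ : Filtration ℝ mΩ)
    (M : ℝ → Ω → ℝ)
    (hadp : Adapted ℱ M)
    (hint : ∀ t ∈ Set.Icc (0 : ℝ) T, Integrable (M t) P)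
    (hmart : ∀ s t : ℝ, 0 ≤ s → s ≤ t → t ≤ T → P[M t | ℱ s] =ᵐ[P] M s)
    (hcont : ∀ ω, ContinuousOn (fun s => M s ω) (Set.Icc 0 T))
    (m : ℝ) (hM0 : ∀ᵐ ω ∂P, M 0 ω = m)
    (a : ℝ) (ha : m < a)
    (hflat : ∀ᵐ ω ∂P, ¬ ∃ s r : ℝ, 0 ≤ s ∧ s < r ∧ r ≤ T ∧
      ∀ u ∈ Set.Icc s r, M u ω = a)
    (τlow τup : Ω → ℝ)
    (hτlow : ∀ ω, τlow ω = sInf ({s ∈ Set.Icc (0 : ℝ) T | a ≤ M s ω} ∪ {T}))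
    (hτup : ∀ ω, τup ω = sInf ({s ∈ Set.Icc (0 : ℝ) T | a < M s ω} ∪ {T})) :
    τlow =ᵐ[P] τup :=
  stmt_14_general T hT ℱ M hadp hmart hcont m hM0 a ha hflat τlow τup hτlow hτup
end

section
/- Let a ∈ ℝ with m > -a. Define pathwise σ̲_a := inf{t ∈ [0,T] : M_t ≤ -a} ∧ T and σ̄_a := inf{t ∈ [0,T] : M_t < -a} ∧ T (inf ∅ := +∞). Then for every t ∈ [0,T], M_{t ∧ σ̲_a} = M_{t ∧ σ̄_a} P-almost surely. -/
/-!
Write `b = -a`. Since the paths are continuous and start at `m > b`, the path sits exactly at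
level `b` at time `σ̲` whenever `σ̲ < t`, and stays `≥ b` on `[0, σ̄]`. So
`X := M_{t ∧ σ̲} ≤ Y := M_{t ∧ σ̄}`, with `X = b` on `{σ̲ < t}`. Optional sampling for the
supermartingale `M ∧ c`, where `c = b + 1`, gives `E[Y ∧ c] ≤ E[X ∧ c]`; hence `X ∧ c = Y ∧ c`
a.s., which forces `Y = b = X` on `{σ̲ < t}`.

Optional sampling at the continuous times `σ̲ ≤ σ̄` comes from discretisation. Both are optional
times (`{σ < s} ∈ ℱ_s`, by rational approximation of the path), so rounding them up to a grid
gives stopping times of the grid filtration, and discrete optional sampling passes to the limit by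
Vitali's theorem: for the nonpositive supermartingale `f = M ∧ c - c` and a stopping time
`τ ≤ N`, `∫_G |f_τ| ≤ ∫_G |f_N|` for all `G ∈ ℱ_τ`, so the values `f_τ` are uniformly integrable.
-/

open MeasureTheory Set Filter Topology
open scoped ENNReal NNReal

section HittingTime

noncomputable def hitTime (T : ℝ) (p : ℝ → Prop) : ℝ := sInf ({s ∈ Icc 0 T | p s} ∪ {T})

variable {T b : ℝ} {f : ℝ → ℝ} {p : ℝ → Prop}

lemma bddBelow_sep_union (hT : 0 ≤ T) (p : ℝ → Prop) : BddBelow ({s ∈ Icc 0 T | p s} ∪ {T}) :=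
  ⟨0, by rintro x (hx | rfl); exacts [hx.1.1, hT]⟩

lemma hitTime_mem_Icc (hT : 0 ≤ T) (p : ℝ → Prop) : hitTime T p ∈ Icc 0 T :=
  ⟨le_csInf ⟨T, by simp⟩ (by rintro x (hx | rfl); exacts [hx.1.1, hT]),
    csInf_le (bddBelow_sep_union hT p) (by simp)⟩

lemma hitTime_antitone (hT : 0 ≤ T) {q : ℝ → Prop} (hpq : ∀ s, p s → q s) :
    hitTime T q ≤ hitTime T p :=
  csInf_le_csInf (bddBelow_sep_union hT q) ⟨T, by simp⟩
    (union_subset_union_left _ fun s hs => ⟨hs.1, hpq s hs.2⟩)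

lemma not_of_lt_hitTime (hT : 0 ≤ T) {u : ℝ} (hu : u ∈ Icc 0 T) (hlt : u < hitTime T p) :
    ¬ p u :=
  fun hpu => notMem_of_lt_csInf hlt (bddBelow_sep_union hT p) (Or.inl ⟨hu, hpu⟩)

lemma hitTime_lt_iff (hT : 0 ≤ T) {s : ℝ} (hsT : s ≤ T) :
    hitTime T p < s ↔ ∃ u, 0 ≤ u ∧ u < s ∧ p u := by
  rw [hitTime, csInf_lt_iff (bddBelow_sep_union hT p) ⟨T, by simp⟩]
  constructor
  · rintro ⟨u, ⟨⟨hu0, -⟩, hpu⟩ | rfl, hus⟩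
    · exact ⟨u, hu0, hus, hpu⟩
    · exact absurd hsT hus.not_ge
  · rintro ⟨u, hu0, hus, hpu⟩
    exact ⟨u, Or.inl ⟨⟨hu0, hus.le.trans hsT⟩, hpu⟩, hus⟩

lemma hitTime_lt_iff_exists_rat (hT : 0 ≤ T) {s : ℝ} (hsT : s ≤ T) :
    hitTime T p < s ↔ ∃ r : ℚ, (r : ℝ) < s ∧ ∃ u : ℝ, 0 ≤ u ∧ u ≤ r ∧ p u := by
  rw [hitTime_lt_iff hT hsT]
  constructor
  · rintro ⟨u, hu0, hus, hpu⟩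
    obtain ⟨r, hur, hrs⟩ := exists_rat_btwn hus
    exact ⟨r, hrs, u, hu0, hur.le, hpu⟩
  · rintro ⟨r, hrs, u, hu0, hur, hpu⟩
    exact ⟨u, hu0, hur.trans_lt hrs, hpu⟩

lemma ContinuousOn.le_of_forall_Ico (hf : ContinuousOn f (Icc 0 T)) {s : ℝ} (hs : s ∈ Icc 0 T)
    (h0 : b ≤ f 0) (h : ∀ u ∈ Ico 0 s, b ≤ f u) : b ≤ f s := by
  rcases hs.1.eq_or_lt with rfl | hs0
  · exact h0
  have hsub : Icc 0 s ⊆ Icc 0 T ∩ f ⁻¹' Ici b := by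
    rw [← closure_Ico hs0.ne]
    exact closure_minimal (fun u hu => ⟨⟨hu.1, hu.2.le.trans hs.2⟩, h u hu⟩)
      (hf.preimage_isClosed_of_isClosed isClosed_Icc isClosed_Ici)
  exact (hsub ⟨hs0.le, le_rfl⟩).2

lemma ContinuousOn.apply_hitTime_le (hf : ContinuousOn f (Icc 0 T)) (hT : 0 ≤ T)
    (h : hitTime T (fun s => f s ≤ b) < T) : f (hitTime T fun s => f s ≤ b) ≤ b := by
  have hclosed : IsClosed ({s ∈ Icc 0 T | f s ≤ b} ∪ {T}) :=
    (hf.preimage_isClosed_of_isClosed isClosed_Icc isClosed_Iic).union isClosed_singleton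
  rcases hclosed.csInf_mem ⟨T, by simp⟩ (bddBelow_sep_union hT _) with hmem | hmem
  · exact hmem.2
  · exact absurd hmem h.ne

lemma ContinuousOn.apply_hitTime_eq (hf : ContinuousOn f (Icc 0 T)) (hT : 0 ≤ T) (hb : b < f 0)
    (h : hitTime T (fun s => f s ≤ b) < T) : f (hitTime T fun s => f s ≤ b) = b := by
  have hmem := hitTime_mem_Icc hT fun s => f s ≤ b
  refine le_antisymm (hf.apply_hitTime_le hT h) (hf.le_of_forall_Ico hmem hb.le fun u hu => ?_)
  exact le_of_not_ge
    (not_of_lt_hitTime (p := fun s => f s ≤ b) hT ⟨hu.1, hu.2.le.trans hmem.2⟩ hu.2)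

lemma ContinuousOn.le_apply_min_hitTime (hf : ContinuousOn f (Icc 0 T)) (hT : 0 ≤ T)
    (hb : b ≤ f 0) {t : ℝ} (ht : t ∈ Icc 0 T) : b ≤ f (min t (hitTime T fun s => f s < b)) := by
  have hmem := hitTime_mem_Icc hT fun s => f s < b
  refine hf.le_of_forall_Ico ⟨le_min ht.1 hmem.1, (min_le_left _ _).trans ht.2⟩ hb
    fun u hu => le_of_not_gt
      (not_of_lt_hitTime (p := fun s => f s < b) hT ?_ (hu.2.trans_le (min_le_right _ _)))
  exact ⟨hu.1, (hu.2.trans_le (min_le_left _ _)).le.trans ht.2⟩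

lemma ContinuousOn.exists_rat_le_lt (hf : ContinuousOn f (Icc 0 T)) {u β : ℝ}
    (hu : u ∈ Icc 0 T) (hfu : f u < β) : ∃ q : ℚ, 0 ≤ (q : ℝ) ∧ (q : ℝ) ≤ u ∧ f q < β := by
  rcases hu.1.eq_or_lt with rfl | hu0
  · exact ⟨0, by simpa using hfu⟩
  obtain ⟨δ, hδ, hball⟩ := Metric.eventually_nhds_iff.1
    (eventually_nhdsWithin_iff.1 ((hf u hu).eventually (Iio_mem_nhds hfu)))
  obtain ⟨q, hq1, hq2⟩ := exists_rat_btwn (max_lt (sub_lt_self u hδ) hu0)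
  have hq0 : 0 ≤ (q : ℝ) := (le_max_right _ _).trans hq1.le
  refine ⟨q, hq0, hq2.le, hball ?_ ⟨hq0, hq2.le.trans hu.2⟩⟩
  rw [Real.dist_eq, abs_sub_lt_iff]
  constructor <;> linarith [le_max_left (u - δ) 0]

lemma ContinuousOn.hitTime_lt_iff_exists_rat (hf : ContinuousOn f (Icc 0 T)) (hT : 0 ≤ T)
    {s : ℝ} (hsT : s ≤ T) :
    hitTime T (fun u => f u < b) < s ↔ ∃ q : ℚ, 0 ≤ (q : ℝ) ∧ (q : ℝ) < s ∧ f q < b := by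
  rw [hitTime_lt_iff hT hsT]
  constructor
  · rintro ⟨u, hu0, hus, hfu⟩
    obtain ⟨q, hq0, hqu, hfq⟩ := hf.exists_rat_le_lt ⟨hu0, hus.le.trans hsT⟩ hfu
    exact ⟨q, hq0, hqu.trans_lt hus, hfq⟩
  · rintro ⟨q, hq0, hqs, hfq⟩
    exact ⟨q, hq0, hqs, hfq⟩

lemma ContinuousOn.exists_le_iff_forall_exists_rat (hf : ContinuousOn f (Icc 0 T)) {r : ℝ}
    (hrT : r ≤ T) : (∃ u, 0 ≤ u ∧ u ≤ r ∧ f u ≤ b) ↔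
      ∀ j : ℕ, ∃ q : ℚ, 0 ≤ (q : ℝ) ∧ (q : ℝ) ≤ r ∧ f q < b + 1 / (j + 1) := by
  constructor
  · rintro ⟨u, hu0, hur, hfu⟩ j
    obtain ⟨q, hq0, hqu, hfq⟩ := hf.exists_rat_le_lt ⟨hu0, hur.trans hrT⟩
      (hfu.trans_lt (lt_add_of_pos_right b Nat.one_div_pos_of_nat))
    exact ⟨q, hq0, hqu.trans hur, hfq⟩
  · intro h
    obtain ⟨q₀, hq₀, hq₀r, -⟩ := h 0
    obtain ⟨u, hu, hmin⟩ := isCompact_Icc.exists_isMinOn (nonempty_Icc.2 (hq₀.trans hq₀r))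
      (hf.mono (Icc_subset_Icc_right hrT))
    refine ⟨u, hu.1, hu.2, le_of_not_gt fun hbu => ?_⟩
    obtain ⟨j, hj⟩ := exists_nat_one_div_lt (sub_pos.2 hbu)
    obtain ⟨q, hq0, hqr, hfq⟩ := h j
    have hfuq : f u ≤ f q := hmin (show (q : ℝ) ∈ Icc 0 r from ⟨hq0, hqr⟩)
    linarith

end HittingTime

section Grid

noncomputable def gridTime (t : ℝ) (n k : ℕ) : ℝ := min t (k * (t / (n + 1)))

/-- The index of the first grid point `gridTime t n k` strictly to the right of `x`, capped at
`n + 1`. -/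
noncomputable def gridIndex (t : ℝ) (n : ℕ) (x : ℝ) : ℕ :=
  min (n + 1) (⌊x / (t / (n + 1))⌋₊ + 1)

variable {t : ℝ} {n : ℕ}

lemma gridTime_monotone (ht : 0 ≤ t) : Monotone (gridTime t n) :=
  fun _ _ hkl => min_le_min_left _ (by gcongr)

lemma gridTime_mem_Icc (ht : 0 ≤ t) (k : ℕ) : gridTime t n k ∈ Icc 0 t :=
  ⟨le_min ht (by positivity), min_le_left _ _⟩

lemma gridTime_of_le {k : ℕ} (ht : 0 ≤ t) (hk : n + 1 ≤ k) : gridTime t n k = t := by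
  refine min_eq_left ?_
  calc t = ((n : ℝ) + 1) * (t / (n + 1)) := by field_simp
    _ ≤ k * (t / (n + 1)) := by gcongr; exact_mod_cast hk

lemma gridIndex_le (x : ℝ) : gridIndex t n x ≤ n + 1 := min_le_left _ _

lemma gridIndex_monotone (ht : 0 ≤ t) : Monotone (gridIndex t n) := fun _ _ hxy =>
  min_le_min_left _ (Nat.add_le_add_right (Nat.floor_le_floor (by gcongr)) 1)

lemma gridIndex_le_iff (ht : 0 < t) {x : ℝ} (hx : 0 ≤ x) {k : ℕ} (hk : k ≤ n) :
    gridIndex t n x ≤ k ↔ x < gridTime t n k := by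
  have hh : 0 < t / (n + 1) := by positivity
  have hkt : k * (t / (n + 1)) ≤ t := by
    calc k * (t / (n + 1)) ≤ ((n : ℝ) + 1) * (t / (n + 1)) := by
          gcongr; exact_mod_cast hk.trans n.le_succ
      _ = t := by field_simp
  rw [gridIndex, gridTime, min_eq_right hkt, min_le_iff, Nat.add_one_le_iff, Nat.add_one_le_iff,
    Nat.floor_lt (div_nonneg hx hh.le), div_lt_iff₀ hh]
  exact or_iff_right hk.not_gt

lemma gridTime_gridIndex_mem (ht : 0 < t) {x : ℝ} (hx : 0 ≤ x) :
    gridTime t n (gridIndex t n x) ∈ Icc (min t x) (min t x + t / (n + 1)) := by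
  set h := t / (n + 1) with hh_def
  have hh : 0 < h := by positivity
  set j := ⌊x / h⌋₊ + 1
  have hxj : x < j * h := by
    rw [← div_lt_iff₀ hh]; push_cast [j]; exact Nat.lt_floor_add_one _
  have hjx : j * h ≤ x + h := by
    have := Nat.floor_le (div_nonneg hx hh.le)
    push_cast [j]
    rw [add_mul, one_mul]
    gcongr
    rwa [← le_div_iff₀ hh]
  have heq : gridTime t n (gridIndex t n x) = min t (j * h) := by
    rcases le_total (n + 1) j with hj | hj
    · rw [gridIndex, min_eq_left hj, gridTime_of_le ht.le le_rfl, eq_comm, min_eq_left]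
      calc t = ((n : ℝ) + 1) * h := by rw [hh_def]; field_simp
        _ ≤ j * h := by gcongr; exact_mod_cast hj
    · rw [gridIndex, min_eq_right hj, gridTime]
  rw [heq]
  constructor
  · exact min_le_min_left _ hxj.le
  · calc min t (j * h) ≤ min (t + h) (x + h) := min_le_min (by linarith) hjx
      _ = min t x + h := min_add_add_right t x h

lemma tendsto_gridTime_gridIndex (ht : 0 < t) {x : ℝ} (hx : 0 ≤ x) :
    Tendsto (fun n => gridTime t n (gridIndex t n x)) atTop (𝓝 (min t x)) := by
  have hmesh : Tendsto (fun n : ℕ => min t x + t / (n + 1)) atTop (𝓝 (min t x)) := by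
    simpa using tendsto_const_nhds.add
      ((tendsto_const_div_atTop_nhds_zero_nat t).comp (tendsto_add_atTop_nat 1))
  exact tendsto_of_tendsto_of_tendsto_of_le_of_le tendsto_const_nhds hmesh
    (fun n => (gridTime_gridIndex_mem ht hx).1) (fun n => (gridTime_gridIndex_mem ht hx).2)

lemma ContinuousOn.tendsto_gridTime_gridIndex {T : ℝ} {f : ℝ → ℝ}
    (hf : ContinuousOn f (Icc 0 T)) (ht : 0 < t) (htT : t ≤ T) {x : ℝ} (hx : 0 ≤ x) :
    Tendsto (fun n => f (gridTime t n (gridIndex t n x))) atTop (𝓝 (f (min t x))) :=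
  (hf _ ⟨le_min ht.le hx, (min_le_left _ _).trans htT⟩).tendsto.comp
    (tendsto_nhdsWithin_iff.2 ⟨_root_.tendsto_gridTime_gridIndex ht hx,
      Eventually.of_forall fun _ =>
        ⟨(gridTime_mem_Icc ht.le _).1, (gridTime_mem_Icc ht.le _).2.trans htT⟩⟩)

end Grid

namespace MeasureTheory

section StoppingTime

variable {Ω : Type*} {m : MeasurableSpace Ω}

def Filtration.precomp {ι κ : Type*} [Preorder ι] [Preorder κ] (ℱ : Filtration ι m)
    (g : κ → ι) (hg : Monotone g) : Filtration κ m :=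
  ⟨fun k => ℱ (g k), fun _ _ hkl => ℱ.mono (hg hkl), fun _ => ℱ.le _⟩

lemma IsStoppingTime.piecewise_const_of_measurableSet {ι : Type*} [Preorder ι]
    {𝒢 : Filtration ι m} {τ : Ω → WithTop ι} (hτ : IsStoppingTime 𝒢 τ) {N : ι}
    (hτN : ∀ ω, τ ω ≤ N) {s : Set Ω} [DecidablePred (· ∈ s)]
    (hs : MeasurableSet[hτ.measurableSpace] s) :
    IsStoppingTime 𝒢 (s.piecewise τ fun _ => N) := by
  intro i
  have hsplit : {ω | s.piecewise τ (fun _ => (N : WithTop ι)) ω ≤ i} =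
      s ∩ {ω | τ ω ≤ i} ∪ sᶜ ∩ {_ω | (N : WithTop ι) ≤ i} := by
    ext ω
    by_cases hω : ω ∈ s <;> simp [hω]
  rw [hsplit]
  refine (hs.2 i).union ?_
  by_cases hNi : (N : WithTop ι) ≤ i
  · have hsi : s ∩ {ω | τ ω ≤ i} = s := inter_eq_left.2 fun ω _ => (hτN ω).trans hNi
    simpa [hNi, hsi] using (hs.2 i).compl
  · simp [hNi]

variable {μ : Measure Ω} [IsFiniteMeasure μ]

lemma Supermartingale.min_const_sub {ι : Type*} [Preorder ι] {ℱ : Filtration ι m}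
    {f : ι → Ω → ℝ} (hf : Supermartingale f ℱ μ) (c : ℝ) :
    Supermartingale (fun i ω => min (f i ω) c - c) ℱ μ := by
  have heq : (fun i ω => min (f i ω) c - c) = -(-f ⊔ fun _ _ => -c) - fun _ _ => c := by
    funext i ω
    simp [max_neg_neg]
  rw [heq]
  exact ((hf.neg.sup (martingale_const ℱ μ (-c)).submartingale).neg).sub_martingale
    (martingale_const ℱ μ c)

variable {𝒢 : Filtration ℕ m} {f : ℕ → Ω → ℝ} {τ : Ω → ℕ∞} {N : ℕ} {s : Set Ω}

/-- Optional sampling applied to the stopping time that equals `τ` on `s` and `N` off `s`. -/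
lemma Supermartingale.setIntegral_le_setIntegral_stoppedValue (hf : Supermartingale f 𝒢 μ)
    (hτ : IsStoppingTime 𝒢 τ) (hτN : ∀ ω, τ ω ≤ N) (hs : MeasurableSet[hτ.measurableSpace] s) :
    ∫ ω in s, f N ω ∂μ ≤ ∫ ω in s, stoppedValue f τ ω ∂μ := by
  classical
  have hsm : MeasurableSet s := hτ.measurableSpace_le s hs
  have hfτ : Integrable (stoppedValue f τ) μ := integrable_stoppedValue ℕ hτ hf.integrable hτN
  set η : Ω → ℕ∞ := s.piecewise τ fun _ => (N : ℕ∞)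
  have hηN : η ≤ fun _ => (N : ℕ∞) := fun ω => by
    by_cases hω : ω ∈ s <;> simp [η, hω, hτN ω]
  have hη : stoppedValue f η = s.indicator (stoppedValue f τ) + sᶜ.indicator (f N) := by
    ext ω
    by_cases hω : ω ∈ s <;> simp [η, hω, stoppedValue]
  have hmono := hf.neg.expected_stoppedValue_mono (hτ.piecewise_const_of_measurableSet hτN hs)
    (isStoppingTime_const 𝒢 N) hηN (fun _ => le_rfl)
  change ∫ ω, -stoppedValue f η ω ∂μ ≤ ∫ ω, -f N ω ∂μ at hmono
  rw [integral_neg, integral_neg, neg_le_neg_iff, hη,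
    integral_add' (hfτ.indicator hsm) ((hf.integrable N).indicator hsm.compl),
    integral_indicator hsm, integral_indicator hsm.compl] at hmono
  linarith [integral_add_compl hsm (hf.integrable N)]

lemma Supermartingale.setLIntegral_enorm_stoppedValue_le (hf : Supermartingale f 𝒢 μ)
    (hf0 : ∀ i ω, f i ω ≤ 0) (hτ : IsStoppingTime 𝒢 τ) (hτN : ∀ ω, τ ω ≤ N)
    (hs : MeasurableSet[hτ.measurableSpace] s) :
    ∫⁻ ω in s, ‖stoppedValue f τ ω‖ₑ ∂μ ≤ ∫⁻ ω in s, ‖f N ω‖ₑ ∂μ := by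
  rw [← ofReal_integral_norm_eq_lintegral_enorm
      (integrable_stoppedValue ℕ hτ hf.integrable hτN).integrableOn,
    ← ofReal_integral_norm_eq_lintegral_enorm (hf.integrable N).integrableOn]
  refine ENNReal.ofReal_le_ofReal ?_
  simp_rw [Real.norm_of_nonpos (hf0 _ _), stoppedValue, Real.norm_of_nonpos (hf0 _ _),
    integral_neg]
  exact neg_le_neg (hf.setIntegral_le_setIntegral_stoppedValue hτ hτN hs)

end StoppingTime

section UniformIntegrable

variable {α : Type*} {m : MeasurableSpace α} {μ : Measure α} [IsFiniteMeasure μ]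

lemma uniformIntegrable_of_setLIntegral_enorm_le {ι : Type*} {W : ι → α → ℝ} {Z : α → ℝ}
    (hW : ∀ i, Measurable (W i)) (hZ : Integrable Z μ)
    (h : ∀ i (C : ℝ≥0), ∫⁻ x in {x | C ≤ ‖W i x‖₊}, ‖W i x‖ₑ ∂μ ≤
      ∫⁻ x in {x | C ≤ ‖W i x‖₊}, ‖Z x‖ₑ ∂μ) :
    UniformIntegrable W 1 μ := by
  refine uniformIntegrable_of le_rfl ENNReal.one_ne_top (fun i => (hW i).aestronglyMeasurable)
    fun ε hε => ?_
  obtain ⟨δ, hδ, hδε⟩ := exists_pos_setLIntegral_lt_of_measure_lt hZ.2.ne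
    (ENNReal.ofReal_pos.2 hε).ne'
  obtain ⟨C, hC⟩ := ENNReal.exists_nat_mul_gt hδ.ne' hZ.2.ne
  refine ⟨C, fun i => ?_⟩
  set G := {x | (C : ℝ≥0) ≤ ‖W i x‖₊}
  have hG : MeasurableSet G := measurableSet_le measurable_const (hW i).nnnorm
  -- Markov's inequality, with `‖Z‖` in place of `‖W i‖`
  have hμG : μ G < δ := by
    refine lt_of_mul_lt_mul_left' (a := (C : ℝ≥0∞)) (lt_of_le_of_lt ?_ hC)
    calc (C : ℝ≥0∞) * μ G = ∫⁻ _ in G, (C : ℝ≥0∞) ∂μ := by rw [setLIntegral_const, mul_comm]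
      _ ≤ ∫⁻ x in G, ‖W i x‖ₑ ∂μ := setLIntegral_mono (hW i).enorm fun x hx => by
          simpa [G, enorm, ← ENNReal.coe_natCast] using hx
      _ ≤ ∫⁻ x in G, ‖Z x‖ₑ ∂μ := h i C
      _ ≤ ∫⁻ x, ‖Z x‖ₑ ∂μ := setLIntegral_le_lintegral _ _
  simp_rw [eLpNorm_one_eq_lintegral_enorm, enorm_indicator_eq_indicator_enorm,
    lintegral_indicator hG]
  exact (h i C).trans (hδε G hμG).le

lemma UniformIntegrable.tendsto_integral {f : ℕ → α → ℝ} {g : α → ℝ}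
    (hUI : UniformIntegrable f 1 μ) (hfg : ∀ᵐ x ∂μ, Tendsto (fun n => f n x) atTop (𝓝 (g x))) :
    Tendsto (fun n => ∫ x, f n x ∂μ) atTop (𝓝 (∫ x, g x ∂μ)) := by
  have hg := hUI.integrable_of_ae_tendsto hfg
  exact tendsto_integral_of_L1' g hg.1
    (Eventually.of_forall fun n => memLp_one_iff_integrable.1 (hUI.memLp n))
    (tendsto_Lp_finite_of_tendsto_ae le_rfl ENNReal.one_ne_top hUI.1
      (memLp_one_iff_integrable.2 hg) hUI.2.1 hfg)

end UniformIntegrable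

end MeasureTheory

section ContinuousSupermartingale

variable {Ω : Type*} {mΩ : MeasurableSpace Ω} {P : Measure Ω} {T : ℝ} {ℱ : Filtration ℝ mΩ}
  {M : ℝ → Ω → ℝ}

lemma measurableSet_hitTime_le_lt (hadp : Adapted ℱ M)
    (hcont : ∀ ω, ContinuousOn (fun s => M s ω) (Icc 0 T)) (hT : 0 ≤ T) (b : ℝ) {s : ℝ}
    (hsT : s ≤ T) : MeasurableSet[ℱ s] {ω | hitTime T (fun u => M u ω ≤ b) < s} := by
  have hset : {ω | hitTime T (fun u => M u ω ≤ b) < s} =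
      ⋃ (r : ℚ) (_ : (r : ℝ) < s), ⋂ j : ℕ, ⋃ (q : ℚ) (_ : 0 ≤ (q : ℝ) ∧ (q : ℝ) ≤ r),
        {ω | M q ω < b + 1 / (j + 1)} := by
    ext ω
    simp only [mem_ofPred_eq, mem_iUnion, mem_iInter, exists_prop, and_assoc]
    rw [hitTime_lt_iff_exists_rat hT hsT]
    exact exists_congr fun r => and_congr_right fun hrs =>
      (hcont ω).exists_le_iff_forall_exists_rat (hrs.le.trans hsT)
  rw [hset]
  refine MeasurableSet.iUnion fun r => MeasurableSet.iUnion fun hrs => MeasurableSet.iInter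
    fun j => MeasurableSet.iUnion fun q => MeasurableSet.iUnion fun hq => ?_
  exact ℱ.mono (hq.2.trans hrs.le) _ ((hadp q) measurableSet_Iio)

lemma measurableSet_hitTime_lt_lt (hadp : Adapted ℱ M)
    (hcont : ∀ ω, ContinuousOn (fun s => M s ω) (Icc 0 T)) (hT : 0 ≤ T) (b : ℝ) {s : ℝ}
    (hsT : s ≤ T) : MeasurableSet[ℱ s] {ω | hitTime T (fun u => M u ω < b) < s} := by
  have hset : {ω | hitTime T (fun u => M u ω < b) < s} =
      ⋃ (q : ℚ) (_ : 0 ≤ (q : ℝ) ∧ (q : ℝ) < s), {ω | M q ω < b} := by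
    ext ω
    simp only [mem_ofPred_eq, mem_iUnion, exists_prop, and_assoc]
    exact (hcont ω).hitTime_lt_iff_exists_rat hT hsT
  rw [hset]
  exact MeasurableSet.iUnion fun q => MeasurableSet.iUnion fun hq =>
    ℱ.mono hq.2.le _ ((hadp q) measurableSet_Iio)

lemma supermartingale_precomp (hadp : Adapted ℱ M)
    (hint : ∀ t ∈ Icc (0 : ℝ) T, Integrable (M t) P)
    (hsuper : ∀ s t : ℝ, 0 ≤ s → s ≤ t → t ≤ T → P[M t | ℱ s] ≤ᵐ[P] M s)
    {g : ℕ → ℝ} (hg : Monotone g) (hgT : ∀ k, g k ∈ Icc 0 T) :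
    Supermartingale (fun k => M (g k)) (ℱ.precomp g hg) P :=
  ⟨fun k => (hadp (g k)).stronglyMeasurable,
    fun i j hij => hsuper _ _ (hgT i).1 (hg hij) (hgT j).2, fun k => hint _ (hgT k)⟩

lemma supermartingale_grid [IsFiniteMeasure P] (hadp : Adapted ℱ M)
    (hint : ∀ t ∈ Icc (0 : ℝ) T, Integrable (M t) P)
    (hsuper : ∀ s t : ℝ, 0 ≤ s → s ≤ t → t ≤ T → P[M t | ℱ s] ≤ᵐ[P] M s)
    {t : ℝ} (ht : 0 ≤ t) (htT : t ≤ T) (c : ℝ) (n : ℕ) :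
    Supermartingale (fun k ω => min (M (gridTime t n k) ω) c - c)
      (ℱ.precomp (gridTime t n) (gridTime_monotone ht)) P :=
  (supermartingale_precomp hadp hint hsuper (gridTime_monotone ht) fun k =>
    ⟨(gridTime_mem_Icc ht k).1, (gridTime_mem_Icc ht k).2.trans htT⟩).min_const_sub c

lemma isStoppingTime_gridIndex {t : ℝ} (ht : 0 < t) {σ : Ω → ℝ} (hσ0 : ∀ ω, 0 ≤ σ ω)
    (hσ : ∀ s ≤ t, MeasurableSet[ℱ s] {ω | σ ω < s}) (n : ℕ) :
    IsStoppingTime (ℱ.precomp (gridTime t n) (gridTime_monotone ht.le))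
      (fun ω => (gridIndex t n (σ ω) : ℕ∞)) := by
  intro k
  change MeasurableSet[ℱ (gridTime t n k)] {ω | (gridIndex t n (σ ω) : ℕ∞) ≤ (k : ℕ∞)}
  simp only [Nat.cast_le]
  rcases le_or_gt k n with hk | hk
  · simp_rw [gridIndex_le_iff ht (hσ0 _) hk]
    exact hσ _ (gridTime_mem_Icc ht.le k).2
  · simp [(gridIndex_le _).trans hk]

lemma uniformIntegrable_min_gridTime_gridIndex [IsFiniteMeasure P] (hadp : Adapted ℱ M)
    (hint : ∀ t ∈ Icc (0 : ℝ) T, Integrable (M t) P)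
    (hsuper : ∀ s t : ℝ, 0 ≤ s → s ≤ t → t ≤ T → P[M t | ℱ s] ≤ᵐ[P] M s)
    {t : ℝ} (ht : 0 < t) (htT : t ≤ T) (c : ℝ) {σ : Ω → ℝ} (hσ0 : ∀ ω, 0 ≤ σ ω)
    (hσ : ∀ s ≤ t, MeasurableSet[ℱ s] {ω | σ ω < s}) :
    UniformIntegrable (fun n ω => min (M (gridTime t n (gridIndex t n (σ ω))) ω) c - c) 1 P := by
  have hF := supermartingale_grid hadp hint hsuper ht.le htT c
  have hτ := isStoppingTime_gridIndex ht hσ0 hσ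
  have hmeas n :=
    measurable_stoppedValue (hF n).stronglyAdapted.isStronglyProgressive_of_discrete (hτ n)
  have hZ : Integrable (fun ω => min (M t ω) c - c) P := by
    simpa [gridTime_of_le ht.le le_rfl] using (hF 0).integrable 1
  refine uniformIntegrable_of_setLIntegral_enorm_le
    (fun n => (hmeas n).mono (hτ n).measurableSpace_le le_rfl) hZ fun n C => ?_
  have h := (hF n).setLIntegral_enorm_stoppedValue_le (fun k ω => by simp) (hτ n)
    (fun ω => Nat.cast_le.2 (gridIndex_le (n := n) _))
    (hmeas n (measurableSet_le (measurable_const (a := C)) measurable_nnnorm))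
  rw [gridTime_of_le ht.le le_rfl] at h
  exact h

lemma integrable_min_stopped [IsFiniteMeasure P] (hadp : Adapted ℱ M)
    (hint : ∀ t ∈ Icc (0 : ℝ) T, Integrable (M t) P)
    (hsuper : ∀ s t : ℝ, 0 ≤ s → s ≤ t → t ≤ T → P[M t | ℱ s] ≤ᵐ[P] M s)
    (hcont : ∀ ω, ContinuousOn (fun s => M s ω) (Icc 0 T))
    {t : ℝ} (ht : 0 < t) (htT : t ≤ T) (c : ℝ) {σ : Ω → ℝ} (hσ0 : ∀ ω, 0 ≤ σ ω)
    (hσ : ∀ s ≤ t, MeasurableSet[ℱ s] {ω | σ ω < s}) :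
    Integrable (fun ω => min (M (min t (σ ω)) ω) c - c) P :=
  UniformIntegrable.integrable_of_ae_tendsto
    (uniformIntegrable_min_gridTime_gridIndex hadp hint hsuper ht htT c hσ0 hσ)
    (ae_of_all _ fun ω =>
      (((hcont ω).inf continuousOn_const).sub continuousOn_const).tendsto_gridTime_gridIndex
        ht htT (hσ0 ω))

theorem integral_min_stopped_le [IsFiniteMeasure P] (hadp : Adapted ℱ M)
    (hint : ∀ t ∈ Icc (0 : ℝ) T, Integrable (M t) P)
    (hsuper : ∀ s t : ℝ, 0 ≤ s → s ≤ t → t ≤ T → P[M t | ℱ s] ≤ᵐ[P] M s)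
    (hcont : ∀ ω, ContinuousOn (fun s => M s ω) (Icc 0 T))
    {t : ℝ} (ht : 0 < t) (htT : t ≤ T) (c : ℝ) {σ ρ : Ω → ℝ} (hσ0 : ∀ ω, 0 ≤ σ ω)
    (hσρ : ∀ ω, σ ω ≤ ρ ω) (hσ : ∀ s ≤ t, MeasurableSet[ℱ s] {ω | σ ω < s})
    (hρ : ∀ s ≤ t, MeasurableSet[ℱ s] {ω | ρ ω < s}) :
    ∫ ω, (min (M (min t (ρ ω)) ω) c - c) ∂P ≤ ∫ ω, (min (M (min t (σ ω)) ω) c - c) ∂P := by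
  have hρ0 ω : 0 ≤ ρ ω := (hσ0 ω).trans (hσρ ω)
  have hN ω : ContinuousOn (fun s => min (M s ω) c - c) (Icc 0 T) :=
    ((hcont ω).inf continuousOn_const).sub continuousOn_const
  refine le_of_tendsto_of_tendsto'
    ((uniformIntegrable_min_gridTime_gridIndex hadp hint hsuper ht htT c hρ0 hρ).tendsto_integral
      (ae_of_all _ fun ω => (hN ω).tendsto_gridTime_gridIndex ht htT (hρ0 ω)))
    ((uniformIntegrable_min_gridTime_gridIndex hadp hint hsuper ht htT c hσ0 hσ).tendsto_integral
      (ae_of_all _ fun ω => (hN ω).tendsto_gridTime_gridIndex ht htT (hσ0 ω))) fun n => ?_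
  have h := (supermartingale_grid hadp hint hsuper ht.le htT c n).neg.expected_stoppedValue_mono
    (isStoppingTime_gridIndex ht hσ0 hσ n) (isStoppingTime_gridIndex ht hρ0 hρ n)
    (fun ω => Nat.cast_le.2 (gridIndex_monotone ht.le (hσρ ω)))
    (fun ω => Nat.cast_le.2 (gridIndex_le (n := n) _))
  change ∫ ω, -(min (M (gridTime t n (gridIndex t n (σ ω))) ω) c - c) ∂P ≤
    ∫ ω, -(min (M (gridTime t n (gridIndex t n (ρ ω))) ω) c - c) ∂P at h
  rwa [integral_neg, integral_neg, neg_le_neg_iff] at h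

theorem ae_eq_stopped_of_le [IsFiniteMeasure P] (hadp : Adapted ℱ M)
    (hint : ∀ t ∈ Icc (0 : ℝ) T, Integrable (M t) P)
    (hsuper : ∀ s t : ℝ, 0 ≤ s → s ≤ t → t ≤ T → P[M t | ℱ s] ≤ᵐ[P] M s)
    (hcont : ∀ ω, ContinuousOn (fun s => M s ω) (Icc 0 T))
    {t : ℝ} (ht : 0 < t) (htT : t ≤ T) {σ ρ : Ω → ℝ} (hσ0 : ∀ ω, 0 ≤ σ ω)
    (hσρ : ∀ ω, σ ω ≤ ρ ω) (hσ : ∀ s ≤ t, MeasurableSet[ℱ s] {ω | σ ω < s})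
    (hρ : ∀ s ≤ t, MeasurableSet[ℱ s] {ω | ρ ω < s}) {b : ℝ}
    (hσb : ∀ᵐ ω ∂P, σ ω < t → M (σ ω) ω = b) (hρb : ∀ᵐ ω ∂P, b ≤ M (min t (ρ ω)) ω) :
    ∀ᵐ ω ∂P, M (min t (σ ω)) ω = M (min t (ρ ω)) ω := by
  set c := b + 1
  have hX := integrable_min_stopped hadp hint hsuper hcont ht htT c hσ0 hσ
  have hY := integrable_min_stopped hadp hint hsuper hcont ht htT c
    (fun ω => (hσ0 ω).trans (hσρ ω)) hρ
  have hXY : (fun ω => min (M (min t (σ ω)) ω) c - c) ≤ᵐ[P]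
      fun ω => min (M (min t (ρ ω)) ω) c - c := by
    filter_upwards [hσb, hρb] with ω hσbω hρbω
    rcases lt_or_ge (σ ω) t with h | h
    · rw [min_eq_right h.le, hσbω h]
      gcongr
    · rw [min_eq_left h, min_eq_left (h.trans (hσρ ω))]
  have heq := (integral_eq_iff_of_ae_le hX hY hXY).1 (le_antisymm (integral_mono_ae hX hY hXY)
    (integral_min_stopped_le hadp hint hsuper hcont ht htT c hσ0 hσρ hσ hρ))
  filter_upwards [heq, hσb] with ω hω hσbω
  rcases lt_or_ge (σ ω) t with h | h
  · simp only [min_eq_right h.le, hσbω h, sub_left_inj] at hω ⊢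
    rw [min_eq_left (by linarith : b ≤ c)] at hω
    rcases min_eq_iff.1 hω.symm with ⟨h1, -⟩ | ⟨h1, -⟩
    · exact h1.symm
    · linarith
  · rw [min_eq_left h, min_eq_left (h.trans (hσρ ω))]

end ContinuousSupermartingale

theorem stmt_15_general {Ω : Type*} {mΩ : MeasurableSpace Ω} {P : Measure Ω}
    [IsProbabilityMeasure P]
    (T : ℝ) (ℱ : Filtration ℝ mΩ)
    (M : ℝ → Ω → ℝ)
    (hadp : Adapted ℱ M)
    (hint : ∀ t ∈ Set.Icc (0 : ℝ) T, Integrable (M t) P)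
    (hsuper : ∀ s t : ℝ, 0 ≤ s → s ≤ t → t ≤ T → P[M t | ℱ s] ≤ᵐ[P] M s)
    (hcont : ∀ ω, ContinuousOn (fun s => M s ω) (Set.Icc 0 T))
    (m : ℝ) (hM0 : ∀ᵐ ω ∂P, M 0 ω = m)
    (a : ℝ) (ha : -a < m)
    (σlow σup : Ω → ℝ)
    (hσlow : ∀ ω, σlow ω = sInf ({s ∈ Set.Icc (0 : ℝ) T | M s ω ≤ -a} ∪ {T}))
    (hσup : ∀ ω, σup ω = sInf ({s ∈ Set.Icc (0 : ℝ) T | M s ω < -a} ∪ {T})) :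
    ∀ t ∈ Set.Icc (0 : ℝ) T,
      ∀ᵐ ω ∂P, M (min t (σlow ω)) ω = M (min t (σup ω)) ω := by
  obtain rfl : σlow = fun ω => hitTime T fun s => M s ω ≤ -a := funext hσlow
  obtain rfl : σup = fun ω => hitTime T fun s => M s ω < -a := funext hσup
  rintro t ⟨ht0, htT⟩
  have hT0 : 0 ≤ T := ht0.trans htT
  have hl0 ω := (hitTime_mem_Icc hT0 fun s => M s ω ≤ -a).1
  rcases ht0.eq_or_lt with rfl | ht0
  · exact ae_of_all _ fun ω => by
      rw [min_eq_left (hl0 ω), min_eq_left (hitTime_mem_Icc hT0 _).1]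
  refine ae_eq_stopped_of_le hadp hint hsuper hcont ht0 htT hl0
    (fun ω => hitTime_antitone hT0 fun s (hs : M s ω < -a) => hs.le)
    (fun s hs => measurableSet_hitTime_le_lt hadp hcont hT0 (-a) (hs.trans htT))
    (fun s hs => measurableSet_hitTime_lt_lt hadp hcont hT0 (-a) (hs.trans htT)) (b := -a) ?_ ?_
  · filter_upwards [hM0] with ω hω h
    exact (hcont ω).apply_hitTime_eq hT0 (hω ▸ ha) (h.trans_le htT)
  · filter_upwards [hM0] with ω hω
    exact (hcont ω).le_apply_min_hitTime hT0 (hω ▸ ha).le ⟨ht0.le, htT⟩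

/-- For a continuous-path supermartingale `(M_t)_{t ∈ [0,T]}` with `M_0 = m` a.s. and
`m > -a`, the processes stopped at the pathwise hitting times
`σ̲_a = inf{t ∈ [0,T] : M_t ≤ -a} ∧ T` and `σ̄_a = inf{t ∈ [0,T] : M_t < -a} ∧ T`
coincide: for every `t ∈ [0,T]`, `M_{t ∧ σ̲_a} = M_{t ∧ σ̄_a}` almost surely. -/
theorem stmt_15 {Ω : Type*} {mΩ : MeasurableSpace Ω} {P : Measure Ω}
    [IsProbabilityMeasure P]
    (T : ℝ) (hT : 0 < T) (ℱ : Filtration ℝ mΩ)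
    (M : ℝ → Ω → ℝ)
    (hadp : Adapted ℱ M)
    (hint : ∀ t ∈ Set.Icc (0 : ℝ) T, Integrable (M t) P)
    (hsuper : ∀ s t : ℝ, 0 ≤ s → s ≤ t → t ≤ T → P[M t | ℱ s] ≤ᵐ[P] M s)
    (hcont : ∀ ω, ContinuousOn (fun s => M s ω) (Set.Icc 0 T))
    (m : ℝ) (hM0 : ∀ᵐ ω ∂P, M 0 ω = m)
    (a : ℝ) (ha : -a < m)
    (σlow σup : Ω → ℝ)
    (hσlow : ∀ ω, σlow ω = sInf ({s ∈ Set.Icc (0 : ℝ) T | M s ω ≤ -a} ∪ {T}))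
    (hσup : ∀ ω, σup ω = sInf ({s ∈ Set.Icc (0 : ℝ) T | M s ω < -a} ∪ {T})) :
    ∀ t ∈ Set.Icc (0 : ℝ) T,
      ∀ᵐ ω ∂P, M (min t (σlow ω)) ω = M (min t (σup ω)) ω :=
  stmt_15_general T ℱ M hadp hint hsuper hcont m hM0 a ha σlow σup hσlow hσup
end

section
/- Let β ≥ 1 and n ≥ 0 be real numbers, and let x, y ∈ ℝ be such that |x| < n implies x = y. Then |x − y|^β ≤ 2^{2β−1} |x|^β · 1_{{|x| ≥ n}} + 2^{β−1} |y|^β · 1_{{|y| > n}}. -/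
/-!
Always `|x - y|^β ≤ (|x| + |y|)^β ≤ 2^{β-1} (|x|^β + |y|^β)` by convexity of `t ↦ t^β`.
If `|x| < n` the left side vanishes. Otherwise the `|y|^β` term is kept when `|y| > n`,
and when `|y| ≤ n ≤ |x|` it is absorbed into the `|x|^β` term, turning the constant into `2^β ≤ 2^{2β-1}`.
-/

namespace Real

lemma add_rpow_le_two_rpow_mul_add_rpow {a b p : ℝ} (ha : 0 ≤ a) (hb : 0 ≤ b) (hp : 1 ≤ p) :
    (a + b) ^ p ≤ 2 ^ (p - 1) * (a ^ p + b ^ p) := by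
  lift a to NNReal using ha
  lift b to NNReal using hb
  exact_mod_cast NNReal.rpow_add_le_mul_rpow_add_rpow a b hp

lemma abs_sub_rpow_le_two_rpow_mul_add_rpow (x y : ℝ) {p : ℝ} (hp : 1 ≤ p) :
    |x - y| ^ p ≤ 2 ^ (p - 1) * (|x| ^ p + |y| ^ p) :=
  calc |x - y| ^ p ≤ (|x| + |y|) ^ p := by gcongr; exact abs_sub _ _
    _ ≤ 2 ^ (p - 1) * (|x| ^ p + |y| ^ p) :=
      add_rpow_le_two_rpow_mul_add_rpow (abs_nonneg x) (abs_nonneg y) hp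

end Real

theorem stmt_16_general (β n : ℝ) (hβ : 1 ≤ β) (x y : ℝ)
    (hxy : |x| < n → x = y) :
    |x - y| ^ β ≤
      (2 : ℝ) ^ (2 * β - 1) * (if n ≤ |x| then |x| ^ β else 0) +
        (2 : ℝ) ^ (β - 1) * (if n < |y| then |y| ^ β else 0) := by
  by_cases hx : n ≤ |x|
  swap
  · obtain rfl := hxy (not_le.mp hx)
    rw [sub_self, abs_zero, Real.zero_rpow (by linarith)]
    positivity
  have h_const : (2 : ℝ) ^ (β - 1) * 2 ≤ 2 ^ (2 * β - 1) := by
    rw [← Real.rpow_add_one two_ne_zero]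
    exact Real.rpow_le_rpow_of_exponent_le one_le_two (by linarith)
  have h_two_pos : (0 : ℝ) < 2 ^ (β - 1) := by positivity
  refine (Real.abs_sub_rpow_le_two_rpow_mul_add_rpow x y hβ).trans ?_
  rw [if_pos hx]
  split_ifs with hy
  · have hx_pow : 0 ≤ |x| ^ β := by positivity
    nlinarith
  · have hy_pow : |y| ^ β ≤ |x| ^ β :=
      Real.rpow_le_rpow (abs_nonneg y) (by linarith) (by linarith)
    calc (2 : ℝ) ^ (β - 1) * (|x| ^ β + |y| ^ β) ≤ 2 ^ (β - 1) * 2 * |x| ^ β := by nlinarith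
      _ ≤ 2 ^ (2 * β - 1) * |x| ^ β := by gcongr
      _ = _ := by ring

/-- If `β ≥ 1`, `n ≥ 0`, and `|x| < n` implies `x = y`, then
`|x − y|^β ≤ 2^{2β−1} |x|^β 1_{|x| ≥ n} + 2^{β−1} |y|^β 1_{|y| > n}`. -/
theorem stmt_16 (β n : ℝ) (hβ : 1 ≤ β) (hn : 0 ≤ n) (x y : ℝ)
    (hxy : |x| < n → x = y) :
    |x - y| ^ β ≤
      (2 : ℝ) ^ (2 * β - 1) * (if n ≤ |x| then |x| ^ β else 0) +
        (2 : ℝ) ^ (β - 1) * (if n < |y| then |y| ^ β else 0) :=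
  stmt_16_general β n hβ x y hxy
end
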